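/- arXiv:2108.02520 — 9 statements merged into one kernel-verified Lean document; each statement's English description precedes it below -/
import Mathlib

section
/- Let $P_t$ be the path with vertex set $\{1,\dots,t\}$ and edges $\{i(i+1) : 1\le i\le t-1\}$, where $t \ge 2n-1$. If $\mathcal{F}$ is a collection of $n$ independent sets of $P_t$, each of size exactly $n$, then one can choose distinct vertices $x_1,\dots,x_n$ with $x_i \in F_i$ for an appropriate ordering $F_1,\dots,F_n$ of $\mathcal{F}$, such that $\{x_1,\dots,x_n\}$ is an independent set of $P_t$. In other words, $f_{P_t}(n,n)=n$. -/
open Finset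

/-- A set of vertices is independent: no two of its members are adjacent. -/
def IsIndep {V : Type*} (G : SimpleGraph V) (S : Set V) : Prop :=
  ∀ a ∈ S, ∀ b ∈ S, ¬ G.Adj a b

/-- `(F, G)` admits a rainbow independent `m`-set: `m` distinct vertices chosen
from `m` distinct members of `F` (one vertex per member) forming an independent set. -/
def RainbowIndep {V : Type*} [DecidableEq V] (G : SimpleGraph V) {k : ℕ}
    (F : Fin k → Finset V) (m : ℕ) : Prop :=
  ∃ (s : Finset (Fin k)) (x : Fin k → V),
    s.card = m ∧ (∀ i ∈ s, x i ∈ F i) ∧ (s.image x).card = m ∧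
    IsIndep G (s.image x : Set V)

/-- The cycle `C_t` with vertex set `ZMod t`, consecutive residues adjacent. -/
def cyc (t : ℕ) : SimpleGraph (ZMod t) :=
  SimpleGraph.fromRel (fun a b => b = a + 1)

/-- The path with vertex set `{1,…,t}` (inside `ℕ`) and edges `i(i+1)`. -/
def pathN (t : ℕ) : SimpleGraph ℕ :=
  SimpleGraph.fromRel (fun a b => b = a + 1 ∧ 1 ≤ a ∧ b ≤ t)

lemma pathN_not_adj {t a b : ℕ} (h : a + 2 ≤ b) : ¬ (pathN t).Adj a b := by
  simp only [pathN, SimpleGraph.fromRel_adj]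
  omega

lemma pathN_adj_succ {t v : ℕ} (h1 : 1 ≤ v) (h2 : v + 1 ≤ t) : (pathN t).Adj v (v + 1) := by
  simp only [pathN, SimpleGraph.fromRel_adj]
  exact ⟨by omega, Or.inl ⟨trivial, h1, h2⟩⟩

lemma key (t : ℕ) : ∀ (k n : ℕ) (s : Finset (Fin n)) (F : Fin n → Finset ℕ),
    s.card = k →
    (∀ i ∈ s, F i ⊆ Finset.Icc 1 t ∧ k ≤ (F i).card ∧ IsIndep (pathN t) (F i : Set ℕ)) →
    ∃ x : Fin n → ℕ, (∀ i ∈ s, x i ∈ F i) ∧ (s.image x).card = k ∧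
      IsIndep (pathN t) ((s.image x : Finset ℕ) : Set ℕ) := by
  intro k
  induction k with
  | zero =>
    intro n s F hs _
    refine ⟨fun _ => 0, ?_, ?_, ?_⟩ <;>
      simp [card_eq_zero.mp hs, IsIndep]
  | succ k ih =>
    intro n s F hs hF
    -- s is nonempty
    have hsne : s.Nonempty := card_pos.mp (by omega)
    -- the union of all F i over i ∈ s
    have hUne : (s.biUnion F).Nonempty := by
      obtain ⟨i, hi⟩ := hsne
      have : (F i).Nonempty := card_pos.mp (by have := (hF i hi).2.1; omega)
      obtain ⟨y, hy⟩ := this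
      exact ⟨y, mem_biUnion.mpr ⟨i, hi, hy⟩⟩
    set v := (s.biUnion F).min' hUne with hv
    obtain ⟨i0, hi0s, hvF⟩ := mem_biUnion.mp ((s.biUnion F).min'_mem hUne)
    have hmin : ∀ i ∈ s, ∀ y ∈ F i, v ≤ y := fun i hi y hy =>
      min'_le _ _ (mem_biUnion.mpr ⟨i, hi, hy⟩)
    have hv1 : 1 ≤ v := by
      have := (hF i0 hi0s).1 hvF
      exact (mem_Icc.mp this).1
    set s' := s.erase i0 with hs'
    have hs'card : s'.card = k := by
      have := card_erase_of_mem hi0s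
      rw [hs] at this
      rw [hs']; omega
    set F' := fun j => (F j).filter (fun y => v + 2 ≤ y) with hF'
    have hF'hyp : ∀ i ∈ s', F' i ⊆ Finset.Icc 1 t ∧ k ≤ (F' i).card ∧
        IsIndep (pathN t) ((F' i : Finset ℕ) : Set ℕ) := by
      intro j hj
      have hjs : j ∈ s := mem_of_mem_erase hj
      obtain ⟨hsub, hcard, hind⟩ := hF j hjs
      refine ⟨(filter_subset _ _).trans hsub, ?_, ?_⟩
      · rcases Nat.eq_zero_or_pos k with hk0 | hk1
        · omega
        · -- F j has at least 2 elements, all in [v, t]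
          have h2 : 1 < (F j).card := by omega
          obtain ⟨a, ha, b, hb, hab⟩ := one_lt_card.mp h2
          have hat : a ≤ t := (mem_Icc.mp (hsub ha)).2
          have hbt : b ≤ t := (mem_Icc.mp (hsub hb)).2
          have hav : v ≤ a := hmin j hjs a ha
          have hbv : v ≤ b := hmin j hjs b hb
          have hvt : v + 1 ≤ t := by omega
          -- F j cannot contain both v and v+1
          have hboth : ¬ (v ∈ F j ∧ v + 1 ∈ F j) := by
            rintro ⟨h1, h2⟩
            exact hind v (by exact_mod_cast h1) (v + 1) (by exact_mod_cast h2)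
              (pathN_adj_succ hv1 hvt)
          have hsmall : (F j).filter (fun y => ¬ v + 2 ≤ y) ⊆ {v, v + 1} := by
            intro y hy
            obtain ⟨hy1, hy2⟩ := mem_filter.mp hy
            have := hmin j hjs y hy1
            simp only [mem_insert, mem_singleton]
            omega
          have hle1 : ((F j).filter (fun y => ¬ v + 2 ≤ y)).card ≤ 1 := by
            by_contra hgt
            have h2' := one_lt_card.mp (by omega : 1 < ((F j).filter (fun y => ¬ v + 2 ≤ y)).card)
            obtain ⟨a', ha', b', hb', hab'⟩ := h2'
            have ha'' := hsmall ha'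
            have hb'' := hsmall hb'
            simp only [mem_insert, mem_singleton] at ha'' hb''
            have ha'F := mem_filter.mp ha'
            have hb'F := mem_filter.mp hb'
            rcases ha'' with rfl | rfl <;> rcases hb'' with rfl | rfl
            · exact hab' rfl
            · exact hboth ⟨ha'F.1, hb'F.1⟩
            · exact hboth ⟨hb'F.1, ha'F.1⟩
            · exact hab' rfl
          have := card_filter_add_card_filter_not
            (s := F j) (p := fun y => v + 2 ≤ y)
          simp only [hF']
          omega
      · intro a ha b hb
        exact hind a (Set.mem_of_mem_of_subset ha (by exact_mod_cast filter_subset _ _))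
          b (Set.mem_of_mem_of_subset hb (by exact_mod_cast filter_subset _ _))
    obtain ⟨x', hx'mem, hx'card, hx'ind⟩ := ih n s' F' hs'card hF'hyp
    set x : Fin n → ℕ := fun i => if i = i0 then v else x' i with hx
    have hxmem : ∀ i ∈ s, x i ∈ F i := by
      intro i hi
      by_cases h : i = i0
      · subst h; simpa [hx] using hvF
      · have hi' : i ∈ s' := mem_erase.mpr ⟨h, hi⟩
        have := hx'mem i hi'
        simp only [hx, if_neg h]
        exact (filter_subset _ _) this
    have himage : s.image x = insert v (s'.image x') := by
      have : s = insert i0 s' := (insert_erase hi0s).symm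
      rw [this, image_insert]
      congr 1
      · simp [hx]
      · apply image_congr
        intro i hi
        simp only [hx]
        exact if_neg (ne_of_mem_erase hi)
    have hx'big : ∀ y ∈ s'.image x', v + 2 ≤ y := by
      intro y hy
      obtain ⟨j, hj, rfl⟩ := mem_image.mp hy
      exact (mem_filter.mp (hx'mem j hj)).2
    have hvnot : v ∉ s'.image x' := fun h => by have := hx'big v h; omega
    refine ⟨x, hxmem, ?_, ?_⟩
    · rw [himage, card_insert_of_notMem hvnot, hx'card]
    · intro a ha b hb
      rw [himage] at ha hb
      simp only [coe_insert, Set.mem_insert_iff, mem_coe] at ha hb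
      rcases ha with rfl | ha <;> rcases hb with rfl | hb
      · exact fun h => (pathN t).irrefl h
      · exact pathN_not_adj (hx'big b hb)
      · exact fun h => pathN_not_adj (hx'big a ha) h.symm
      · exact hx'ind a (by exact_mod_cast ha) b (by exact_mod_cast hb)

/-- `f_{P_t}(n,n) = n` for `t ≥ 2n-1`. -/
theorem stmt0 (n t : ℕ) (ht : 2 * n - 1 ≤ t)
    (F : Fin n → Finset ℕ)
    (hF : ∀ i, F i ⊆ Finset.Icc 1 t ∧ (F i).card = n ∧ IsIndep (pathN t) (F i : Set ℕ)) :
    RainbowIndep (pathN t) F n := by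
  obtain ⟨x, hmem, hcard, hind⟩ := key t n n Finset.univ F (by simp)
    (fun i _ => ⟨(hF i).1, (hF i).2.1.ge, (hF i).2.2⟩)
  exact ⟨Finset.univ, x, by simp, hmem, hcard, hind⟩
end

section
/- Let $C_t$ be a cycle with $t \ge 2n$ vertices. Then $f_{C_t}(n, n-1) = n-1$: every collection of $n-1$ independent $n$-sets of $C_t$ admits a rainbow independent $(n-1)$-set. -/
open Finset

lemma greedy_s2 {ι : Type*} [DecidableEq ι] :
    ∀ (k : ℕ) (s : Finset ι) (A : ι → Finset ℕ), s.card = k →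
    (∀ i ∈ s, k ≤ (A i).card) →
    (∀ i ∈ s, ∀ a ∈ A i, ∀ b ∈ A i, a ≠ b → 2 ≤ Nat.dist a b) →
    ∃ x : ι → ℕ, (∀ i ∈ s, x i ∈ A i) ∧
      (∀ i ∈ s, ∀ j ∈ s, i ≠ j → 2 ≤ Nat.dist (x i) (x j)) := by
  intro k
  induction k with
  | zero =>
    intro s A hcard _ _
    have : s = ∅ := card_eq_zero.mp hcard
    subst this
    exact ⟨fun _ => 0, by simp, by simp⟩
  | succ k ih =>
    intro s A hcard hsize hsparse
    have hsne : s.Nonempty := card_pos.mp (by omega)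
    have hU : (s.biUnion A).Nonempty := by
      obtain ⟨i, hi⟩ := hsne
      have hA : (A i).Nonempty := card_pos.mp (by have := hsize i hi; omega)
      obtain ⟨a, ha⟩ := hA
      exact ⟨a, mem_biUnion.mpr ⟨i, hi, ha⟩⟩
    set m := (s.biUnion A).min' hU with hm
    have hmmem := (s.biUnion A).min'_mem hU
    obtain ⟨i₀, hi₀s, hi₀m⟩ := mem_biUnion.mp hmmem
    have hmin : ∀ i ∈ s, ∀ a ∈ A i, m ≤ a := fun i hi a ha =>
      min'_le _ _ (mem_biUnion.mpr ⟨i, hi, ha⟩)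
    set s' := s.erase i₀ with hs'
    set A' : ι → Finset ℕ := fun j => (A j).filter (fun a => m + 2 ≤ a) with hA'
    have hcard' : s'.card = k := by rw [hs', card_erase_of_mem hi₀s, hcard]; omega
    have hsize' : ∀ j ∈ s', k ≤ (A' j).card := by
      intro j hj
      have hjs : j ∈ s := mem_of_mem_erase hj
      have hsub : (A j).filter (fun a => ¬ (m + 2 ≤ a)) ⊆ {m, m + 1} := by
        intro a ha
        simp only [mem_filter] at ha
        have := hmin j hjs a ha.1
        simp only [mem_insert, mem_singleton]
        omega
      have h1 : ((A j).filter (fun a => ¬ (m + 2 ≤ a))).card ≤ 1 := by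
        by_contra h
        have h' : 1 < ((A j).filter (fun a => ¬ (m + 2 ≤ a))).card := by omega
        obtain ⟨a, ha, b, hb, hab⟩ := one_lt_card.mp h'
        have ha' := hsub ha
        have hb' := hsub hb
        simp only [mem_insert, mem_singleton] at ha' hb'
        have hd := hsparse j hjs a (mem_filter.mp ha).1 b (mem_filter.mp hb).1 hab
        have : Nat.dist a b ≤ 1 := by
          unfold Nat.dist
          rcases ha' with rfl | rfl <;> rcases hb' with rfl | rfl <;> omega
        omega
      have h2 := card_filter_add_card_filter_not (s := A j) (p := fun a => m + 2 ≤ a)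
      have h3 := hsize j hjs
      simp only [hA']
      omega
    have hsparse' : ∀ j ∈ s', ∀ a ∈ A' j, ∀ b ∈ A' j, a ≠ b → 2 ≤ Nat.dist a b := by
      intro j hj a ha b hb hab
      exact hsparse j (mem_of_mem_erase hj) a (mem_filter.mp ha).1 b (mem_filter.mp hb).1 hab
    obtain ⟨x, hx1, hx2⟩ := ih s' A' hcard' hsize' hsparse'
    have key : ∀ l ∈ s, l ≠ i₀ → m + 2 ≤ x l := by
      intro l hl hlne
      exact (mem_filter.mp (hx1 l (mem_erase.mpr ⟨hlne, hl⟩))).2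
    refine ⟨fun j => if j = i₀ then m else x j, ?_, ?_⟩
    · intro i hi
      by_cases h : i = i₀
      · subst h; simpa using hi₀m
      · simp only [if_neg h]
        exact (mem_filter.mp (hx1 i (mem_erase.mpr ⟨h, hi⟩))).1
    · intro i hi j hj hij
      by_cases h1 : i = i₀ <;> by_cases h2 : j = i₀
      · exact absurd (h1.trans h2.symm) hij
      · subst h1
        simp only [eq_self_iff_true, if_true, if_neg h2]
        have := key j hj h2
        unfold Nat.dist; omega
      · subst h2
        simp only [eq_self_iff_true, if_true, if_neg h1]
        have := key i hi h1
        unfold Nat.dist; omega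
      · simp only [if_neg h1, if_neg h2]
        exact hx2 i (mem_erase.mpr ⟨h1, hi⟩) j (mem_erase.mpr ⟨h2, hj⟩) hij

lemma cyc_adj {t : ℕ} {a b : ZMod t} :
    (cyc t).Adj a b ↔ a ≠ b ∧ (b = a + 1 ∨ a = b + 1) := by
  simp [cyc, SimpleGraph.fromRel_adj]

lemma nonadj {t : ℕ} (ht : 1 ≤ t) (v : ZMod t) {p q : ℕ} (hp : p < t) (hq : q < t)
    (hd1 : 2 ≤ Nat.dist p q) (hd2 : Nat.dist p q ≤ t - 2) :
    ¬ (cyc t).Adj (v + (p : ZMod t)) (v + (q : ZMod t)) := by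
  intro h
  rw [cyc_adj] at h
  unfold Nat.dist at hd1 hd2
  rcases h.2 with h2 | h2
  · have hc : ((q : ℕ) : ZMod t) = ((p + 1 : ℕ) : ZMod t) := by
      push_cast
      rw [add_assoc] at h2
      exact add_left_cancel h2
    rw [ZMod.natCast_eq_natCast_iff'] at hc
    rw [Nat.mod_eq_of_lt hq] at hc
    rcases Nat.lt_or_ge (p + 1) t with h3 | h3
    · rw [Nat.mod_eq_of_lt h3] at hc; omega
    · have hpt : p + 1 = t := by omega
      rw [hpt, Nat.mod_self] at hc
      omega
  · have hc : ((p : ℕ) : ZMod t) = ((q + 1 : ℕ) : ZMod t) := by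
      push_cast
      rw [add_assoc] at h2
      exact add_left_cancel h2
    rw [ZMod.natCast_eq_natCast_iff'] at hc
    rw [Nat.mod_eq_of_lt hp] at hc
    rcases Nat.lt_or_ge (q + 1) t with h3 | h3
    · rw [Nat.mod_eq_of_lt h3] at hc; omega
    · have hqt : q + 1 = t := by omega
      rw [hqt, Nat.mod_self] at hc
      omega

/-- `f_{C_t}(n, n-1) = n-1` for `t ≥ 2n`: every `n-1` independent `n`-sets of `C_t`
admit a rainbow independent `(n-1)`-set. -/
theorem stmt2 (n t : ℕ) (ht : 2 * n ≤ t)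
    (F : Fin (n - 1) → Finset (ZMod t))
    (hF : ∀ i, (F i).card = n ∧ IsIndep (cyc t) (F i : Set (ZMod t))) :
    RainbowIndep (cyc t) F (n - 1) := by
  by_cases hn : n ≤ 1
  · have h0 : n - 1 = 0 := by omega
    refine ⟨∅, fun _ => 0, by simp [h0], by simp, by simp [h0], ?_⟩
    intro a ha
    simp at ha
  -- main case : n ≥ 2, t ≥ 4
  push_neg at hn
  have ht4 : 4 ≤ t := by omega
  haveI : NeZero t := ⟨by omega⟩
  haveI : Fact (1 < t) := ⟨by omega⟩
  set last : Fin (n - 1) := ⟨n - 2, by omega⟩ with hlast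
  obtain ⟨v, hv⟩ : (F last).Nonempty := card_pos.mp (by rw [(hF last).1]; omega)
  set g : ZMod t → ℕ := fun w => (w - v).val with hg
  have g_lt : ∀ w, g w < t := fun w => ZMod.val_lt _
  have g_eq : ∀ w, w = v + ((g w : ℕ) : ZMod t) := by
    intro w
    rw [hg]
    simp only [ZMod.natCast_rightInverse (w - v)]
    ring
  have g_inj : Function.Injective g := by
    intro w w' hww
    have h1 := g_eq w
    have h2 := g_eq w'
    rw [hww] at h1
    exact h1.trans h2.symm
  -- key adjacency fact : vertices at nat positions p, p+1 are adjacent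
  have adj_succ : ∀ p : ℕ, p + 1 < t →
      (cyc t).Adj (v + (p : ZMod t)) (v + ((p + 1 : ℕ) : ZMod t)) := by
    intro p hpt
    rw [cyc_adj]
    constructor
    · intro hcon
      have : ((p : ℕ) : ZMod t) = ((p + 1 : ℕ) : ZMod t) := add_left_cancel hcon
      rw [ZMod.natCast_eq_natCast_iff', Nat.mod_eq_of_lt (by omega),
        Nat.mod_eq_of_lt hpt] at this
      omega
    · left; push_cast; ring
  set A : Fin (n - 1) → Finset ℕ :=
    fun i => ((F i).image g).filter (fun p => 2 ≤ p ∧ p ≤ t - 2) with hA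
  set s : Finset (Fin (n - 1)) := univ.erase last with hs
  have hscard : s.card = n - 2 := by
    rw [hs, card_erase_of_mem (mem_univ _), card_univ, Fintype.card_fin]
    omega
  -- size bound
  have hsize : ∀ i ∈ s, n - 2 ≤ (A i).card := by
    intro i _
    have himg : ((F i).image g).card = n := by
      rw [card_image_of_injective _ g_inj, (hF i).1]
    set R := ((F i).image g).filter (fun p => ¬ (2 ≤ p ∧ p ≤ t - 2)) with hR
    have hsub : R ⊆ {0, 1, t - 1} := by
      intro p hp
      simp only [hR, mem_filter] at hp
      obtain ⟨hp1, hp2⟩ := hp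
      obtain ⟨w, hw, hwp⟩ := mem_image.mp hp1
      have := g_lt w
      rw [hwp] at this
      simp only [mem_insert, mem_singleton]
      omega
    have hnot01 : ¬ (0 ∈ R ∧ 1 ∈ R) := by
      rintro ⟨h0, h1⟩
      simp only [hR, mem_filter] at h0 h1
      obtain ⟨w0, hw0, hw0p⟩ := mem_image.mp h0.1
      obtain ⟨w1, hw1, hw1p⟩ := mem_image.mp h1.1
      have e0 : w0 = v := by
        have := g_eq w0; rw [hw0p] at this; simpa using this
      have e1 : w1 = v + ((1 : ℕ) : ZMod t) := by
        have := g_eq w1; rw [hw1p] at this; exact this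
      have hadj : (cyc t).Adj w0 w1 := by
        rw [e0, e1]
        have := adj_succ 0 (by omega)
        simpa using this
      exact (hF i).2 w0 (mem_coe.mpr hw0) w1 (mem_coe.mpr hw1) hadj
    have hRcard : R.card ≤ 2 := by
      by_cases h0 : 0 ∈ R
      · have h1 : 1 ∉ R := fun h1 => hnot01 ⟨h0, h1⟩
        have : R ⊆ {0, t - 1} := by
          intro p hp
          have := hsub hp
          simp only [mem_insert, mem_singleton] at this ⊢
          rcases this with rfl | rfl | rfl
          · left; rfl
          · exact absurd hp h1
          · right; rfl
        calc R.card ≤ ({0, t - 1} : Finset ℕ).card := card_le_card this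
          _ ≤ 2 := card_insert_le _ _ |>.trans (by simp)
      · have : R ⊆ {1, t - 1} := by
          intro p hp
          have := hsub hp
          simp only [mem_insert, mem_singleton] at this ⊢
          rcases this with rfl | rfl | rfl
          · exact absurd hp h0
          · left; rfl
          · right; rfl
        calc R.card ≤ ({1, t - 1} : Finset ℕ).card := card_le_card this
          _ ≤ 2 := card_insert_le _ _ |>.trans (by simp)
    have hsplit : n ≤ (A i).card + R.card := by
      have hsub2 : (F i).image g ⊆ (A i) ∪ R := by
        intro p hp
        by_cases hc : 2 ≤ p ∧ p ≤ t - 2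
        · exact mem_union_left _ (by simp only [hA, mem_filter]; exact ⟨hp, hc⟩)
        · exact mem_union_right _ (by simp only [hR, mem_filter]; exact ⟨hp, hc⟩)
      calc n = ((F i).image g).card := himg.symm
        _ ≤ ((A i) ∪ R).card := card_le_card hsub2
        _ ≤ (A i).card + R.card := card_union_le _ _
    omega
  -- sparseness
  have hsparse : ∀ i ∈ s, ∀ a ∈ A i, ∀ b ∈ A i, a ≠ b → 2 ≤ Nat.dist a b := by
    intro i _ a ha b hb hab
    simp only [hA, mem_filter] at ha hb
    obtain ⟨wa, hwa, hwap⟩ := mem_image.mp ha.1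
    obtain ⟨wb, hwb, hwbp⟩ := mem_image.mp hb.1
    by_contra hcon
    have ea : wa = v + ((a : ℕ) : ZMod t) := by
      have h := g_eq wa; rwa [hwap] at h
    have eb : wb = v + ((b : ℕ) : ZMod t) := by
      have h := g_eq wb; rwa [hwbp] at h
    have hdd : b = a + 1 ∨ a = b + 1 := by unfold Nat.dist at hcon; omega
    rcases hdd with hd | hd
    · have hadj : (cyc t).Adj wa wb := by
        rw [ea, eb, hd]
        exact adj_succ a (by omega)
      exact (hF i).2 wa (mem_coe.mpr hwa) wb (mem_coe.mpr hwb) hadj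
    · have hadj : (cyc t).Adj wb wa := by
        rw [ea, eb, hd]
        exact adj_succ b (by omega)
      exact (hF i).2 wb (mem_coe.mpr hwb) wa (mem_coe.mpr hwa) hadj
  -- apply the greedy lemma
  obtain ⟨x, hx1, hx2⟩ := greedy_s2 (n - 2) s A hscard hsize hsparse
  set pos : Fin (n - 1) → ℕ := fun i => if i = last then 0 else x i with hpos
  have hposmem : ∀ i, i ≠ last → 2 ≤ pos i ∧ pos i ≤ t - 2 := by
    intro i hne
    have his : i ∈ s := mem_erase.mpr ⟨hne, mem_univ _⟩
    have hxi := hx1 i his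
    simp only [hA, mem_filter] at hxi
    simp only [hpos, if_neg hne]
    exact hxi.2
  have hposlt : ∀ i, pos i < t := by
    intro i
    by_cases h : i = last
    · simp only [hpos, if_pos h]; omega
    · have := hposmem i h; omega
  have hplast : ∀ i, i = last → pos i = 0 := by
    intro i h; simp [hpos, h]
  have hpeq : ∀ i, i ≠ last → pos i = x i := by
    intro i h; simp [hpos, h]
  have hdistp : ∀ i j, i ≠ j →
      2 ≤ Nat.dist (pos i) (pos j) ∧ Nat.dist (pos i) (pos j) ≤ t - 2 := by
    intro i j hij
    by_cases h1 : i = last <;> by_cases h2 : j = last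
    · exact absurd (h1.trans h2.symm) hij
    · have hj := hposmem j h2
      rw [hplast i h1]
      unfold Nat.dist; omega
    · have hi := hposmem i h1
      rw [hplast j h2]
      unfold Nat.dist; omega
    · have hi := hposmem i h1
      have hj := hposmem j h2
      have his : i ∈ s := mem_erase.mpr ⟨h1, mem_univ _⟩
      have hjs : j ∈ s := mem_erase.mpr ⟨h2, mem_univ _⟩
      have hxd := hx2 i his j hjs hij
      rw [hpeq i h1, hpeq j h2]
      rw [hpeq i h1] at hi
      rw [hpeq j h2] at hj
      unfold Nat.dist at *; omega
  set y : Fin (n - 1) → ZMod t := fun i => v + ((pos i : ℕ) : ZMod t) with hy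
  have hymem : ∀ i, y i ∈ F i := by
    intro i
    by_cases h : i = last
    · have : y i = v := by
        simp only [hy, hpos, if_pos h]
        push_cast
        ring
      rw [this, h]
      exact hv
    · have his : i ∈ s := mem_erase.mpr ⟨h, mem_univ _⟩
      have hxi := hx1 i his
      simp only [hA, mem_filter] at hxi
      obtain ⟨w, hw, hwp⟩ := mem_image.mp hxi.1
      have : y i = w := by
        have hge := g_eq w
        rw [hwp] at hge
        simp only [hy, hpos, if_neg h]
        exact hge.symm
      rw [this]
      exact hw
  have y_inj : Function.Injective y := by
    intro i j hyij
    by_contra hne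
    have hd := (hdistp i j hne).1
    have hpij : pos i = pos j := by
      have : ((pos i : ℕ) : ZMod t) = ((pos j : ℕ) : ZMod t) := add_left_cancel hyij
      rw [ZMod.natCast_eq_natCast_iff', Nat.mod_eq_of_lt (hposlt i),
        Nat.mod_eq_of_lt (hposlt j)] at this
      exact this
    unfold Nat.dist at hd
    omega
  refine ⟨univ, y, ?_, fun i _ => hymem i, ?_, ?_⟩
  · rw [card_univ, Fintype.card_fin]
  · rw [card_image_of_injective _ y_inj, card_univ, Fintype.card_fin]
  · intro a ha b hb hadj
    simp only [coe_image, Set.mem_image, mem_coe, coe_univ, Set.image_univ,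
      Set.mem_range] at ha hb
    obtain ⟨i, rfl⟩ := ha
    obtain ⟨j, rfl⟩ := hb
    by_cases hij : i = j
    · subst hij
      exact (cyc t).irrefl hadj
    · have hd := hdistp i j hij
      exact nonadj (by omega) v (hposlt i) (hposlt j) hd.1 hd.2 hadj
end

section
/- Let $t \ge 2n$ and let $\mathcal{F}$ be a collection of $n$ independent $n$-sets of the cycle $C_t$. If $(\mathcal{F}, C_t)$ has no rainbow independent $n$-set, then every vertex $v$ of $C_t$ is contained in at least one member of $\mathcal{F}$. -/
open Finset

lemma key_s3 {ι : Type*} [DecidableEq ι] (s : Finset ι) :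
    ∀ f : ι → Finset ℕ,
    (∀ i ∈ s, s.card ≤ (f i).card) →
    (∀ i ∈ s, ∀ x ∈ f i, ∀ y ∈ f i, x < y → x + 2 ≤ y) →
    ∃ y : ι → ℕ, (∀ i ∈ s, y i ∈ f i) ∧
      (∀ i ∈ s, ∀ j ∈ s, i ≠ j → y i + 2 ≤ y j ∨ y j + 2 ≤ y i) := by
  induction s using Finset.strongInduction with
  | _ s ih =>
    intro f hcard hsp
    rcases s.eq_empty_or_nonempty with rfl | hs
    · exact ⟨fun _ => 0, by simp, by simp⟩
    have hU : (s.biUnion f).Nonempty := by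
      obtain ⟨i, hi⟩ := hs
      have h1 : 0 < (f i).card := lt_of_lt_of_le (Finset.card_pos.mpr ⟨i, hi⟩) (hcard i hi)
      obtain ⟨x, hx⟩ := Finset.card_pos.mp h1
      exact ⟨x, Finset.mem_biUnion.mpr ⟨i, hi, hx⟩⟩
    set b := (s.biUnion f).min' hU with hb
    obtain ⟨j, hj, hbj⟩ := Finset.mem_biUnion.mp ((s.biUnion f).min'_mem hU)
    have hmin : ∀ i ∈ s, ∀ x ∈ f i, b ≤ x := fun i hi x hx =>
      (s.biUnion f).min'_le x (Finset.mem_biUnion.mpr ⟨i, hi, hx⟩)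
    set f' : ι → Finset ℕ := fun i => (f i).filter (fun x => b + 2 ≤ x) with hf'
    have hss : s.erase j ⊂ s := Finset.erase_ssubset hj
    have hcard' : ∀ i ∈ s.erase j, (s.erase j).card ≤ (f' i).card := by
      intro i hi
      have his : i ∈ s := Finset.mem_of_mem_erase hi
      have hsub : f' i ⊆ f i := Finset.filter_subset _ _
      have hD : ((f i) \ (f' i)).card ≤ 1 := by
        apply Finset.card_le_one.mpr
        intro a ha c hc
        obtain ⟨haf, ha'⟩ := Finset.mem_sdiff.mp ha
        obtain ⟨hcf, hc'⟩ := Finset.mem_sdiff.mp hc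
        have ha2 : ¬ (b + 2 ≤ a) := fun h => ha' (Finset.mem_filter.mpr ⟨haf, h⟩)
        have hc2 : ¬ (b + 2 ≤ c) := fun h => hc' (Finset.mem_filter.mpr ⟨hcf, h⟩)
        have hba := hmin i his a haf
        have hbc := hmin i his c hcf
        rcases lt_trichotomy a c with h | h | h
        · have := hsp i his a haf c hcf h; omega
        · exact h
        · have := hsp i his c hcf a haf h; omega
      have h1 : ((f i) \ (f' i)).card = (f i).card - (f' i).card :=
        Finset.card_sdiff_of_subset hsub
      have h2 : (f' i).card ≤ (f i).card := Finset.card_le_card hsub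
      have h3 := hcard i his
      have h4 : (s.erase j).card = s.card - 1 := Finset.card_erase_of_mem hj
      omega
    have hsp' : ∀ i ∈ s.erase j, ∀ x ∈ f' i, ∀ y ∈ f' i, x < y → x + 2 ≤ y := by
      intro i hi x hx y hy hxy
      exact hsp i (Finset.mem_of_mem_erase hi) x (Finset.mem_filter.mp hx).1
        y (Finset.mem_filter.mp hy).1 hxy
    obtain ⟨y', hy1, hy2⟩ := ih (s.erase j) hss f' hcard' hsp'
    refine ⟨Function.update y' j b, ?_, ?_⟩
    · intro i hi
      by_cases h : i = j
      · subst h; simpa using hbj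
      · rw [Function.update_of_ne h]
        exact (Finset.mem_filter.mp (hy1 i (Finset.mem_erase.mpr ⟨h, hi⟩))).1
    · intro i hi k hk hik
      by_cases h : i = j
      · have hk' : k ≠ j := fun hh => hik (h.trans hh.symm)
        rw [h, Function.update_self, Function.update_of_ne hk']
        exact Or.inl (Finset.mem_filter.mp (hy1 k (Finset.mem_erase.mpr ⟨hk', hk⟩))).2
      · by_cases h2 : k = j
        · rw [h2, Function.update_self, Function.update_of_ne h]
          exact Or.inr (Finset.mem_filter.mp (hy1 i (Finset.mem_erase.mpr ⟨h, hi⟩))).2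
        · rw [Function.update_of_ne h, Function.update_of_ne h2]
          exact hy2 i (Finset.mem_erase.mpr ⟨h, hi⟩) k (Finset.mem_erase.mpr ⟨h2, hk⟩) hik

/-- If `t ≥ 2n` and `n` independent `n`-sets of `C_t` have no rainbow independent
`n`-set, then every vertex lies in some member of the collection. -/
theorem stmt3 (n t : ℕ) (ht : 2 * n ≤ t)
    (F : Fin n → Finset (ZMod t))
    (hF : ∀ i, (F i).card = n ∧ IsIndep (cyc t) (F i : Set (ZMod t)))
    (hno : ¬ RainbowIndep (cyc t) F n) :
    ∀ v : ZMod t, ∃ i, v ∈ F i := by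
  intro v
  by_contra hv
  push_neg at hv
  apply hno
  rcases Nat.eq_zero_or_pos n with rfl | hn
  · exact ⟨∅, fun i => i.elim0, by simp, by simp, by simp,
      by intro a ha; simp at ha⟩
  have htpos : NeZero t := ⟨by omega⟩
  set g : ZMod t → ℕ := fun w => (w - v).val with hg
  have hginj : Function.Injective g := by
    intro a b hab
    have h1 : ((g a : ℕ) : ZMod t) = ((g b : ℕ) : ZMod t) := by rw [hab]
    simp only [hg, ZMod.natCast_val, ZMod.cast_id] at h1
    exact sub_left_inj.mp h1
  set f : Fin n → Finset ℕ := fun i => (F i).image g with hf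
  have hfcard : ∀ i, (f i).card = n := by
    intro i
    rw [hf]
    rw [Finset.card_image_of_injective _ hginj]
    exact (hF i).1
  -- spacing within each family
  have hsp : ∀ i ∈ (Finset.univ : Finset (Fin n)),
      ∀ x ∈ f i, ∀ y ∈ f i, x < y → x + 2 ≤ y := by
    intro i _ x hx y hy hxy
    obtain ⟨w1, hw1, rfl⟩ := Finset.mem_image.mp hx
    obtain ⟨w2, hw2, rfl⟩ := Finset.mem_image.mp hy
    by_contra hcon
    have hy1 : g w2 = g w1 + 1 := by omega
    have h2 : w2 - v = (w1 - v) + 1 := by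
      have : ((g w2 : ℕ) : ZMod t) = ((g w1 + 1 : ℕ) : ZMod t) := by rw [hy1]
      simpa only [hg, ZMod.natCast_val, ZMod.cast_id, Nat.cast_add, Nat.cast_one] using this
    have hadj : (cyc t).Adj w1 w2 := by
      rw [cyc, SimpleGraph.fromRel_adj]
      refine ⟨fun h => ?_, Or.inl ?_⟩
      · rw [h] at hxy; exact lt_irrefl _ hxy
      · have : w2 - v + v = (w1 - v) + 1 + v := by rw [h2]
        simpa [sub_add_cancel, add_right_comm] using this
    exact (hF i).2 w1 (by simpa using hw1) w2 (by simpa using hw2) hadj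
  have hcard : ∀ i ∈ (Finset.univ : Finset (Fin n)),
      (Finset.univ : Finset (Fin n)).card ≤ (f i).card := by
    intro i _
    rw [hfcard i, Finset.card_univ, Fintype.card_fin]
  obtain ⟨y, hy1, hy2⟩ := key_s3 Finset.univ f hcard hsp
  -- facts about the chosen values
  have hyfacts : ∀ i : Fin n, v + ((y i : ℕ) : ZMod t) ∈ F i ∧ y i < t ∧ y i ≠ 0 := by
    intro i
    obtain ⟨w, hw, hgw⟩ := Finset.mem_image.mp (hy1 i (Finset.mem_univ i))
    have h1 : ((y i : ℕ) : ZMod t) = w - v := by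
      rw [← hgw]; simp only [hg, ZMod.natCast_val, ZMod.cast_id]
    refine ⟨?_, ?_, ?_⟩
    · rw [h1]; simpa [add_sub_cancel] using hw
    · rw [← hgw]; exact ZMod.val_lt _
    · rw [← hgw]
      simp only [hg]
      rw [Ne, ZMod.val_eq_zero, sub_eq_zero]
      intro h
      exact hv i (h ▸ hw)
  set x : Fin n → ZMod t := fun i => v + ((y i : ℕ) : ZMod t) with hx
  have hxval : ∀ i j : Fin n, x i = x j → y i = y j := by
    intro i j hij
    have h1 : ((y i : ℕ) : ZMod t) = ((y j : ℕ) : ZMod t) := by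
      have := hij; rw [hx] at this; simpa using this
    have := congrArg ZMod.val h1
    rwa [ZMod.val_cast_of_lt (hyfacts i).2.1, ZMod.val_cast_of_lt (hyfacts j).2.1] at this
  have hxinj : Function.Injective x := by
    intro i j hij
    by_contra hne
    have := hxval i j hij
    rcases hy2 i (Finset.mem_univ i) j (Finset.mem_univ j) hne with h | h <;> omega
  -- non-adjacency of chosen vertices
  have hnonadj : ∀ i j : Fin n, ¬ (cyc t).Adj (x i) (x j) := by
    intro i j hadj
    rw [cyc, SimpleGraph.fromRel_adj] at hadj
    obtain ⟨hne, hrel⟩ := hadj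
    have hij : i ≠ j := fun h => hne (h ▸ rfl)
    have hspij := hy2 i (Finset.mem_univ i) j (Finset.mem_univ j) hij
    have key1 : ∀ a b : Fin n, x b = x a + 1 → y b = (y a + 1) % t := by
      intro a b hab
      have h1 : ((y b : ℕ) : ZMod t) = ((y a + 1 : ℕ) : ZMod t) := by
        have : v + ((y b : ℕ) : ZMod t) = v + ((y a : ℕ) : ZMod t) + 1 := hab
        push_cast
        linear_combination this
      have := congrArg ZMod.val h1
      rwa [ZMod.val_cast_of_lt (hyfacts b).2.1, ZMod.val_natCast] at this
    have hyi := hyfacts i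
    have hyj := hyfacts j
    rcases hrel with h | h
    · have := key1 i j h
      rcases Nat.lt_or_ge (y i + 1) t with hlt | hge
      · rw [Nat.mod_eq_of_lt hlt] at this; omega
      · have ht' : y i + 1 = t := by omega
        rw [ht', Nat.mod_self] at this
        exact hyj.2.2 this
    · have := key1 j i h
      rcases Nat.lt_or_ge (y j + 1) t with hlt | hge
      · rw [Nat.mod_eq_of_lt hlt] at this; omega
      · have ht' : y j + 1 = t := by omega
        rw [ht', Nat.mod_self] at this
        exact hyi.2.2 this
  refine ⟨Finset.univ, x, by simp, fun i _ => (hyfacts i).1, ?_, ?_⟩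
  · rw [Finset.card_image_of_injective _ hxinj]; simp
  · intro a ha b hb
    obtain ⟨i, _, rfl⟩ := Finset.mem_image.mp (Finset.mem_coe.mp ha)
    obtain ⟨j, _, rfl⟩ := Finset.mem_image.mp (Finset.mem_coe.mp hb)
    exact hnonadj i j
end

section
/- Let $t \ge 2n+1$ and let $\mathcal{F}$ be a collection of $n$ independent $n$-sets of the cycle $C_t$ such that $(\mathcal{F}, C_t)$ has no rainbow independent $n$-set. Then no two adjacent vertices $i$ and $i+1$ of $C_t$ can both have list number exactly $1$; that is, if $c_{\mathcal{F}}(i)=1$ then $c_{\mathcal{F}}(i-1)\ge 2$ and $c_{\mathcal{F}}(i+1)\ge 2$. -/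
open Finset

open SimpleGraph Pointwise

/-! Let `a` be the only list containing `i`, and suppose at most one list, `b`, contains `i + 1`
(the case of `i - 1` follows by reflecting the cycle). Choose `i` for `a`. If no other list
contains both `i - 1` and `i + 1`, every other list keeps at least `n - 1` vertices on the path
`i + 2, …, i - 2`, and a greedy choice along a path (take the least available vertex, discard it
and its successor) completes a rainbow independent set. Otherwise `b` contains `i - 1` and
`i + 1`: if `i + 2 ∉ F a`, choose `i + 1` for `b` instead and run the greedy on
`i + 3, …, i - 1`; if `i + 2 ∈ F a`, choose `i + 2` for `a` and `i - 1` for `b`, and each of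
the other `n - 2` lists keeps `n - 2` vertices on `i + 4, …, i - 3`. -/

def IsRainbowIndepOn {ι V : Type*} (G : SimpleGraph V) (F : ι → Finset V) (s : Finset ι)
    (x : ι → V) : Prop :=
  Set.InjOn x s ∧ (∀ j ∈ s, x j ∈ F j) ∧ ∀ j ∈ s, ∀ j' ∈ s, ¬ G.Adj (x j) (x j')

def listNumber {ι V : Type*} [Fintype ι] [DecidableEq V] (F : ι → Finset V) (v : V) : ℕ :=
  (univ.filter (fun j => v ∈ F j)).card

lemma IsIndep.preimage {V W : Type*} {G : SimpleGraph V} {H : SimpleGraph W} (f : G →g H)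
    {S : Set W} (h : IsIndep H S) : IsIndep G (f ⁻¹' S) :=
  fun _ ha _ hb hab => h _ ha _ hb (f.map_adj hab)

lemma IsIndep.card_inter_pair_le_one {V : Type*} [DecidableEq V] {G : SimpleGraph V}
    {S : Finset V} (h : IsIndep G (S : Set V)) {u v : V} (huv : G.Adj u v) :
    (S ∩ {u, v}).card ≤ 1 := by
  refine card_le_one.2 fun a ha b hb => ?_
  simp only [mem_inter, mem_insert, mem_singleton] at ha hb
  rcases ha with ⟨ha, rfl | rfl⟩ <;> rcases hb with ⟨hb, rfl | rfl⟩
  · rfl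
  · exact absurd huv (h _ ha _ hb)
  · exact absurd huv (h _ hb _ ha)
  · rfl

namespace IsRainbowIndepOn

variable {ι V : Type*} {G : SimpleGraph V} {F : ι → Finset V} {s : Finset ι} {x : ι → V}

lemma mono {F' : ι → Finset V} (h : IsRainbowIndepOn G F s x) (hF : ∀ j ∈ s, F j ⊆ F' j) :
    IsRainbowIndepOn G F' s x :=
  ⟨h.1, fun j hj => hF j hj (h.2.1 j hj), h.2.2⟩

lemma singleton {a : ι} {v : V} (hv : v ∈ F a) : IsRainbowIndepOn G F {a} (fun _ => v) :=
  ⟨by simp, by simpa using hv, fun _ _ _ _ => G.irrefl⟩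

lemma union [DecidableEq ι] {s₂ : Finset ι} {x₂ : ι → V} (h₁ : IsRainbowIndepOn G F s x)
    (h₂ : IsRainbowIndepOn G F s₂ x₂)
    (hsep : ∀ j ∈ s, ∀ j' ∈ s₂, x j ≠ x₂ j' ∧ ¬ G.Adj (x j) (x₂ j')) :
    IsRainbowIndepOn G F (s ∪ s₂) (s.piecewise x x₂) := by
  have hcases : ∀ j ∈ s ∪ s₂, (j ∈ s ∧ s.piecewise x x₂ j = x j) ∨
      (j ∈ s₂ ∧ s.piecewise x x₂ j = x₂ j ∧ j ∉ s) := by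
    intro j hj
    by_cases h : j ∈ s
    · exact Or.inl ⟨h, piecewise_eq_of_mem _ _ _ h⟩
    · exact Or.inr ⟨(mem_union.1 hj).resolve_left h, piecewise_eq_of_notMem _ _ _ h, h⟩
  refine ⟨fun j hj j' hj' hx => ?_, fun j hj => ?_, fun j hj j' hj' => ?_⟩
  · rcases hcases j hj with ⟨hj, e⟩ | ⟨hj, e, hjn⟩ <;>
      rcases hcases j' hj' with ⟨hj', e'⟩ | ⟨hj', e', hjn'⟩ <;> rw [e, e'] at hx
    · exact h₁.1 hj hj' hx
    · exact absurd hx (hsep j hj j' hj').1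
    · exact absurd hx.symm (hsep j' hj' j hj).1
    · exact h₂.1 hj hj' hx
  · rcases hcases j hj with ⟨hj, e⟩ | ⟨hj, e, -⟩ <;> rw [e]
    · exact h₁.2.1 j hj
    · exact h₂.2.1 j hj
  · rcases hcases j hj with ⟨hj, e⟩ | ⟨hj, e, -⟩ <;>
      rcases hcases j' hj' with ⟨hj', e'⟩ | ⟨hj', e', -⟩ <;> rw [e, e']
    · exact h₁.2.2 j hj j' hj'
    · exact (hsep j hj j' hj').2
    · exact fun hadj => (hsep j' hj' j hj).2 hadj.symm
    · exact h₂.2.2 j hj j' hj'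

lemma map {W : Type*} {H : SimpleGraph W} {S : ι → Finset W} (φ : H ↪g G)
    {y : ι → W} (hy : IsRainbowIndepOn H S s y) (hS : ∀ j ∈ s, ∀ w ∈ S j, φ w ∈ F j) :
    IsRainbowIndepOn G F s (φ ∘ y) :=
  ⟨φ.injective.comp_injOn hy.1, fun j hj => hS j hj _ (hy.2.1 j hj),
    fun j hj j' hj' => by simpa using hy.2.2 j hj j' hj'⟩

lemma rainbowIndep [DecidableEq V] {n : ℕ} {F : Fin n → Finset V} {x : Fin n → V}
    (h : IsRainbowIndepOn G F univ x) : RainbowIndep G F n := by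
  refine ⟨univ, x, by simp, fun j hj => h.2.1 j hj, ?_, ?_⟩
  · rw [card_image_of_injOn h.1]; simp
  · intro a ha b hb
    obtain ⟨j, hj, rfl⟩ := mem_image.1 (mem_coe.1 ha)
    obtain ⟨j', hj', rfl⟩ := mem_image.1 (mem_coe.1 hb)
    exact h.2.2 j hj j' hj'

end IsRainbowIndepOn

open Classical in
lemma IsIndep.card_le_card_filter_add_one {α : Type*} [LinearOrder α] {S : Finset α}
    (hS : IsIndep (hasse α) (S : Set α)) {v : α} (hv : ∀ w ∈ S, v ≤ w) :
    S.card ≤ (S.filter (fun w => v < w ∧ ¬ v ⋖ w)).card + 1 := by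
  have hnear : ∀ w ∈ S.filter (fun w => ¬ (v < w ∧ ¬ v ⋖ w)),
      w ∈ S ∧ (w = v ∨ v ⋖ w) := by
    intro w hw
    rw [mem_filter, not_and, not_not] at hw
    exact ⟨hw.1, (hv w hw.1).eq_or_lt.imp Eq.symm hw.2⟩
  have hlost : (S.filter (fun w => ¬ (v < w ∧ ¬ v ⋖ w))).card ≤ 1 := by
    refine card_le_one.2 fun w₁ h₁ w₂ h₂ => ?_
    obtain ⟨h₁, e₁ | c₁⟩ := hnear w₁ h₁ <;>
      obtain ⟨h₂, e₂ | c₂⟩ := hnear w₂ h₂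
    · exact e₁.trans e₂.symm
    · exact absurd (hasse_adj.2 (Or.inl (e₁ ▸ c₂))) (hS _ h₁ _ h₂)
    · exact absurd (hasse_adj.2 (Or.inr (e₂ ▸ c₁))) (hS _ h₁ _ h₂)
    · exact c₁.unique_right c₂
  have := card_filter_add_card_filter_not (s := S) (fun w => v < w ∧ ¬ v ⋖ w)
  omega

theorem exists_isRainbowIndepOn_hasse {ι α : Type*} [DecidableEq ι] [LinearOrder α]
    [Nonempty α] (S : ι → Finset α) (s : Finset ι)
    (hS : ∀ j ∈ s, IsIndep (hasse α) (S j : Set α))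
    (hcard : ∀ j ∈ s, s.card ≤ (S j).card) :
    ∃ x, IsRainbowIndepOn (hasse α) S s x := by
  classical
  induction s using Finset.strongInduction generalizing S with
  | H s ih =>
  rcases s.eq_empty_or_nonempty with rfl | ⟨j₁, hj₁⟩
  · exact ⟨fun _ => Classical.arbitrary α, by simp [IsRainbowIndepOn]⟩
  have hU : (s.biUnion S).Nonempty := by
    obtain ⟨w, hw⟩ := card_pos.1 ((card_pos.2 ⟨j₁, hj₁⟩).trans_le (hcard j₁ hj₁))
    exact ⟨w, mem_biUnion.2 ⟨j₁, hj₁, hw⟩⟩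
  set v := (s.biUnion S).min' hU
  obtain ⟨j₀, hj₀, hv⟩ := mem_biUnion.1 ((s.biUnion S).min'_mem hU)
  have hle : ∀ j ∈ s, ∀ w ∈ S j, v ≤ w := fun j hj w hw =>
    min'_le _ _ (mem_biUnion.2 ⟨j, hj, hw⟩)
  set S' := fun j => (S j).filter (fun w => v < w ∧ ¬ v ⋖ w)
  have hS' : ∀ j ∈ s, (S j).card ≤ (S' j).card + 1 := fun j hj =>
    (hS j hj).card_le_card_filter_add_one (hle j hj)
  obtain ⟨y, hy⟩ := ih (s.erase j₀) (erase_ssubset hj₀) S'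
    (fun j hj a ha b hb =>
      hS j (mem_of_mem_erase hj) _ (filter_subset _ _ ha) _ (filter_subset _ _ hb))
    (fun j hj => by
      have := hS' j (mem_of_mem_erase hj)
      have := hcard j (mem_of_mem_erase hj)
      rw [card_erase_of_mem hj₀]
      omega)
  have hext := (IsRainbowIndepOn.singleton hv).union (hy.mono fun j _ => filter_subset _ _)
    (fun j _ j' hj' => by
      have hy' := (mem_filter.1 (hy.2.1 j' hj')).2
      refine ⟨hy'.1.ne, fun hadj => ?_⟩
      rcases hasse_adj.1 hadj with h | h
      · exact hy'.2 h
      · exact h.lt.not_gt hy'.1)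
  rw [← insert_eq, insert_erase hj₀] at hext
  exact ⟨_, hext⟩

section Cycle

variable {t : ℕ}

lemma cyc_adj_iff {x y : ZMod t} : (cyc t).Adj x y ↔ x ≠ y ∧ (y = x + 1 ∨ x = y + 1) :=
  fromRel_adj _ _ _

lemma cyc_adj_add_left (u x y : ZMod t) : (cyc t).Adj (u + x) (u + y) ↔ (cyc t).Adj x y := by
  simp [cyc_adj_iff, add_assoc]

lemma cyc_adj_add_one (ht : t ≠ 1) (u : ZMod t) : (cyc t).Adj u (u + 1) :=
  cyc_adj_iff.2 ⟨fun h => ht (ZMod.one_eq_zero_iff.1 (by simpa using h.symm)), Or.inl rfl⟩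

def cycNeg : cyc t ↪g cyc t where
  toFun := Neg.neg
  inj' := neg_injective
  map_rel_iff' {x y} := by
    change (cyc t).Adj (-x) (-y) ↔ (cyc t).Adj x y
    simp only [cyc_adj_iff, ne_eq, neg_inj]
    constructor <;> rintro ⟨hne, h | h⟩ <;> refine ⟨hne, ?_⟩
    all_goals first | (left; linear_combination h) | (right; linear_combination h)

lemma natCast_inj_of_lt {p q : ℕ} (hp : p < t) (hq : q < t) : (p : ZMod t) = q ↔ p = q := by
  rw [ZMod.natCast_eq_natCast_iff', Nat.mod_eq_of_lt hp, Nat.mod_eq_of_lt hq]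

lemma ne_and_not_adj_add_natCast {d : ℕ} (hd : 2 ≤ d) (hdt : d + 2 ≤ t) (u : ZMod t) :
    u ≠ u + d ∧ ¬ (cyc t).Adj u (u + d) := by
  have h0 : (d : ZMod t) ≠ ((0 : ℕ) : ZMod t) := by rw [Ne, natCast_inj_of_lt] <;> omega
  have h1 : (d : ZMod t) ≠ ((1 : ℕ) : ZMod t) := by rw [Ne, natCast_inj_of_lt] <;> omega
  have h2 : ((d + 1 : ℕ) : ZMod t) ≠ ((0 : ℕ) : ZMod t) := by
    rw [Ne, natCast_inj_of_lt] <;> omega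
  push_cast at h0 h1 h2
  refine ⟨by simpa using h0, fun hadj => ?_⟩
  rcases (cyc_adj_iff.1 hadj).2 with h | h
  · exact h1 (by simpa using h)
  · exact h2 (by linear_combination -h)

def arcEmbedding (u : ZMod t) (m : ℕ) (hm : m < t) : pathGraph m ↪g cyc t where
  toFun p := u + (p : ℕ)
  inj' p q h := Fin.ext ((natCast_inj_of_lt (p.2.trans hm) (q.2.trans hm)).1 (add_left_cancel h))
  map_rel_iff' {p q} := by
    change (cyc t).Adj (u + (p : ℕ)) (u + (q : ℕ)) ↔ (pathGraph m).Adj p q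
    have hp := p.2; have hq := q.2
    rw [cyc_adj_add_left, cyc_adj_iff, pathGraph_adj, ← Nat.cast_succ, ← Nat.cast_succ, ne_eq,
      natCast_inj_of_lt (by omega) (by omega), natCast_inj_of_lt (by omega) (by omega),
      natCast_inj_of_lt (by omega) (by omega)]
    omega

end Cycle

section Arc

variable {t : ℕ}

def arc (u : ZMod t) (m : ℕ) : Finset (ZMod t) := (range m).image (fun p : ℕ => u + p)

lemma mem_arc {u v : ZMod t} {m : ℕ} : v ∈ arc u m ↔ ∃ p < m, u + p = v := by
  simp [arc]

lemma arc_union_arc (u : ZMod t) (k m : ℕ) : arc u k ∪ arc (u + k) m = arc u (k + m) := by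
  ext v
  simp only [mem_union, mem_arc]
  constructor
  · rintro (⟨p, hp, rfl⟩ | ⟨p, hp, rfl⟩)
    · exact ⟨p, by omega, rfl⟩
    · exact ⟨k + p, by omega, by push_cast; ring⟩
  · rintro ⟨p, hp, rfl⟩
    by_cases hpk : p < k
    · exact Or.inl ⟨p, hpk, rfl⟩
    · exact Or.inr ⟨p - k, by omega, by rw [Nat.cast_sub (by omega)]; ring⟩

lemma arc_eq_univ [NeZero t] (u : ZMod t) {m : ℕ} (h : t ≤ m) : arc u m = univ :=
  eq_univ_of_forall fun v =>
    mem_arc.2 ⟨(v - u).val, (v - u).val_lt.trans_le h, by rw [ZMod.natCast_zmod_val]; ring⟩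

/-- `arc u (k + 2)` is the closed neighbourhood of `arc (u + 1) k`, and the second arc is the rest
of the cycle. -/
lemma ne_and_not_adj_of_mem_arc {u v w : ZMod t} {k : ℕ} (hv : v ∈ arc (u + 1) k)
    (hw : w ∈ arc (u + ((k + 2 : ℕ) : ZMod t)) (t - (k + 2))) :
    v ≠ w ∧ ¬ (cyc t).Adj v w := by
  obtain ⟨p, hp, rfl⟩ := mem_arc.1 hv
  obtain ⟨q, hq, rfl⟩ := mem_arc.1 hw
  have e : u + (k + 2 : ℕ) + q = u + 1 + p + ((k + 1 + q - p : ℕ) : ZMod t) := by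
    rw [Nat.cast_sub (by omega)]; push_cast; ring
  rw [e]
  exact ne_and_not_adj_add_natCast (by omega) (by omega) _

lemma exists_isRainbowIndepOn_arc {ι : Type*} [DecidableEq ι] {F : ι → Finset (ZMod t)}
    {s : Finset ι} (hF : ∀ j ∈ s, IsIndep (cyc t) (F j : Set (ZMod t))) (u : ZMod t) {m : ℕ}
    (hm : m < t) (hcard : ∀ j ∈ s, s.card ≤ (F j ∩ arc u m).card) :
    ∃ x, IsRainbowIndepOn (cyc t) F s x ∧ ∀ j ∈ s, x j ∈ arc u m := by
  rcases s.eq_empty_or_nonempty with rfl | ⟨j₁, hj₁⟩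
  · exact ⟨fun _ => u, by simp [IsRainbowIndepOn], by simp⟩
  have : Nonempty (Fin m) := by
    have h₁ := (card_pos.2 ⟨j₁, hj₁⟩).trans_le ((hcard j₁ hj₁).trans
      ((card_le_card inter_subset_right).trans card_image_le))
    rw [card_range] at h₁
    exact ⟨⟨0, h₁⟩⟩
  set φ := arcEmbedding u m hm
  have hsub : ∀ j, F j ∩ arc u m ⊆ ((F j).preimage φ φ.injective.injOn).image φ := by
    intro j v hv
    obtain ⟨hvF, hva⟩ := mem_inter.1 hv
    obtain ⟨p, hp, rfl⟩ := mem_arc.1 hva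
    exact mem_image.2 ⟨⟨p, hp⟩, mem_preimage.2 hvF, rfl⟩
  obtain ⟨y, hy⟩ :=
    exists_isRainbowIndepOn_hasse (fun j => (F j).preimage φ φ.injective.injOn) s
    (fun j hj => by rw [coe_preimage]; exact (hF j hj).preimage φ.toHom)
    (fun j hj => (hcard j hj).trans <| (card_le_card (hsub j)).trans card_image_le)
  exact ⟨φ ∘ y, hy.map φ fun j _ p hp => mem_preimage.1 hp,
    fun j _ => mem_arc.2 ⟨y j, (y j).2, rfl⟩⟩

end Arc

section Extension

variable {t n : ℕ} {F : Fin n → Finset (ZMod t)}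

/-- The remaining lists are served greedily on the arc complementary to the block
`arc u (k + 2)`, the closed neighbourhood of the chosen vertices. -/
lemma IsRainbowIndepOn.exists_univ_of_arc [NeZero t] (hsize : ∀ j, n ≤ (F j).card)
    (hind : ∀ j, IsIndep (cyc t) (F j : Set (ZMod t))) {s₀ : Finset (Fin n)}
    {x₀ : Fin n → ZMod t} (hx₀ : IsRainbowIndepOn (cyc t) F s₀ x₀) {u : ZMod t} {k : ℕ}
    (hval : ∀ j ∈ s₀, x₀ j ∈ arc (u + 1) k)
    (hmeet : ∀ j ∉ s₀, (F j ∩ arc u (k + 2)).card ≤ s₀.card) :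
    ∃ x, IsRainbowIndepOn (cyc t) F univ x := by
  set w := u + ((k + 2 : ℕ) : ZMod t)
  have hcover : arc u (k + 2) ∪ arc w (t - (k + 2)) = univ := by
    rw [arc_union_arc, arc_eq_univ]; omega
  have hcard : ∀ j ∈ s₀ᶜ, s₀ᶜ.card ≤ (F j ∩ arc w (t - (k + 2))).card := by
    intro j hj
    have hsplit :
        (F j).card ≤ (F j ∩ arc u (k + 2)).card + (F j ∩ arc w (t - (k + 2))).card :=
      calc (F j).card = ((F j ∩ arc u (k + 2)) ∪ (F j ∩ arc w (t - (k + 2)))).card := by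
            rw [← inter_union_distrib_left, hcover, inter_univ]
        _ ≤ _ := card_union_le _ _
    have := hmeet j (mem_compl.1 hj)
    have := hsize j
    rw [card_compl, Fintype.card_fin]
    omega
  obtain ⟨y, hy, hyarc⟩ := exists_isRainbowIndepOn_arc (fun j _ => hind j) w
    (Nat.sub_lt (NeZero.pos t) (by omega)) hcard
  have hx := hx₀.union hy fun j hj j' hj' => ne_and_not_adj_of_mem_arc (hval j hj) (hyarc j' hj')
  rw [union_compl] at hx
  exact ⟨_, hx⟩

lemma exists_isRainbowIndepOn_of_private_vertex [NeZero t] (hsize : ∀ j, n ≤ (F j).card)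
    (hind : ∀ j, IsIndep (cyc t) (F j : Set (ZMod t))) {a : Fin n} {c : ZMod t} (hc : c ∈ F a)
    (hothers : ∀ j ≠ a, c ∉ F j ∧ ¬ (c - 1 ∈ F j ∧ c + 1 ∈ F j)) :
    ∃ x, IsRainbowIndepOn (cyc t) F univ x := by
  refine (IsRainbowIndepOn.singleton hc).exists_univ_of_arc hsize hind (u := c - 1) (k := 1)
    (fun _ _ => mem_arc.2 ⟨0, one_pos, by simp⟩) fun j hj => ?_
  obtain ⟨hcj, hnbr⟩ := hothers j (by simpa using hj)
  have hend : ∀ v ∈ F j ∩ arc (c - 1) (1 + 2), v = c - 1 ∨ v = c + 1 := by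
    intro v hv
    obtain ⟨hvF, hva⟩ := mem_inter.1 hv
    obtain ⟨p, hp, rfl⟩ := mem_arc.1 hva
    interval_cases p
    · simp
    · exact absurd (by simpa using hvF) hcj
    · right; push_cast; ring
  rw [card_singleton]
  refine card_le_one.2 fun v₁ h₁ v₂ h₂ => ?_
  have hF₁ := (mem_inter.1 h₁).1
  have hF₂ := (mem_inter.1 h₂).1
  rcases hend v₁ h₁ with rfl | rfl <;> rcases hend v₂ h₂ with rfl | rfl
  · rfl
  · exact absurd ⟨hF₁, hF₂⟩ hnbr
  · exact absurd ⟨hF₂, hF₁⟩ hnbr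
  · rfl

lemma exists_isRainbowIndepOn_of_private_edge [NeZero t] (hsize : ∀ j, n ≤ (F j).card)
    (hind : ∀ j, IsIndep (cyc t) (F j : Set (ZMod t))) (ht : 5 ≤ t) {a b : Fin n}
    (hab : a ≠ b)
    {v : ZMod t} (hva : v ∈ F a) (hvb : v + 3 ∈ F b)
    (hothers : ∀ j, j ≠ a → j ≠ b → v + 1 ∉ F j ∧ v + 2 ∉ F j) :
    ∃ x, IsRainbowIndepOn (cyc t) F univ x := by
  have hx₀ := (IsRainbowIndepOn.singleton hva).union (IsRainbowIndepOn.singleton hvb)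
    fun _ _ _ _ => by simpa using ne_and_not_adj_add_natCast (d := 3) (by norm_num) ht v
  rw [← insert_eq] at hx₀
  refine hx₀.exists_univ_of_arc hsize hind (u := v - 1) (k := 4) (fun j _ => ?_) fun j hj => ?_
  · unfold piecewise
    split_ifs
    · exact mem_arc.2 ⟨0, by norm_num, by simp⟩
    · exact mem_arc.2 ⟨3, by norm_num, by push_cast; ring⟩
  · obtain ⟨hja, hjb⟩ : j ≠ a ∧ j ≠ b := by simpa using hj
    obtain ⟨hv₁, hv₂⟩ := hothers j hja hjb
    have hsub :
        F j ∩ arc (v - 1) (4 + 2) ⊆ (F j ∩ {v - 1, v}) ∪ (F j ∩ {v + 3, v + 4}) := by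
      intro w hw
      obtain ⟨hwF, hwa⟩ := mem_inter.1 hw
      obtain ⟨p, hp, rfl⟩ := mem_arc.1 hwa
      simp only [mem_union, mem_inter, mem_insert, mem_singleton]
      interval_cases p
      · exact Or.inl ⟨hwF, Or.inl (by simp)⟩
      · exact Or.inl ⟨hwF, Or.inr (by push_cast; ring)⟩
      · exact absurd ((show v - 1 + ((2 : ℕ) : ZMod t) = v + 1 by push_cast; ring) ▸ hwF) hv₁
      · exact absurd ((show v - 1 + ((3 : ℕ) : ZMod t) = v + 2 by push_cast; ring) ▸ hwF) hv₂
      · exact Or.inr ⟨hwF, Or.inl (by push_cast; ring)⟩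
      · exact Or.inr ⟨hwF, Or.inr (by push_cast; ring)⟩
    have hone : t ≠ 1 := by omega
    calc (F j ∩ arc (v - 1) (4 + 2)).card
        ≤ (F j ∩ {v - 1, v}).card + (F j ∩ {v + 3, v + 4}).card :=
          (card_le_card hsub).trans (card_union_le _ _)
      _ ≤ 1 + 1 := add_le_add
          ((hind j).card_inter_pair_le_one (by simpa using cyc_adj_add_one hone (v - 1)))
          ((hind j).card_inter_pair_le_one (by
            convert cyc_adj_add_one hone (v + 3) using 1; ring))
      _ = ({a, b} : Finset (Fin n)).card := (card_pair hab).symm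

lemma exists_isRainbowIndepOn_of_listNumber (ht : 2 * n + 1 ≤ t) (hsize : ∀ j, n ≤ (F j).card)
    (hind : ∀ j, IsIndep (cyc t) (F j : Set (ZMod t))) {i : ZMod t} (h₁ : listNumber F i = 1)
    (h₂ : listNumber F (i + 1) ≤ 1) :
    ∃ x, IsRainbowIndepOn (cyc t) F univ x := by
  obtain ⟨a, ha⟩ := card_eq_one.1 h₁
  have : NeZero t := ⟨by have := a.pos; omega⟩
  have hown : ∀ j, i ∈ F j ↔ j = a := fun j => by simpa using Finset.ext_iff.1 ha j
  have hown' : ∀ j j', i + 1 ∈ F j → i + 1 ∈ F j' → j = j' := fun j j' hj hj' =>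
    card_le_one.1 h₂ j (by simpa using hj) j' (by simpa using hj')
  by_cases hb : ∃ b, i - 1 ∈ F b ∧ i + 1 ∈ F b
  · obtain ⟨b, hb₁, hb₂⟩ := hb
    have hba : b ≠ a := by
      rintro rfl
      exact hind b _ ((hown b).2 rfl) _ hb₂ (cyc_adj_add_one (by have := b.pos; omega) i)
    have hn : 2 ≤ n := by
      have := Fin.val_ne_of_ne hba
      omega
    by_cases ha₂ : i + 2 ∈ F a
    · refine exists_isRainbowIndepOn_of_private_edge hsize hind (by omega) hba hb₁
        (by rwa [show i - 1 + 3 = i + 2 by ring]) fun j hjb hja => ?_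
      rw [sub_add_cancel, show i - 1 + 2 = i + 1 by ring]
      exact ⟨fun h => hja ((hown j).1 h), fun h => hjb (hown' j b h hb₂)⟩
    · refine exists_isRainbowIndepOn_of_private_vertex hsize hind hb₂
        fun j hjb => ⟨fun h => hjb (hown' j b h hb₂), ?_⟩
      rw [add_sub_cancel_right, add_assoc, one_add_one_eq_two]
      rintro ⟨hi, hi₂⟩
      exact ha₂ ((hown j).1 hi ▸ hi₂)
  · exact exists_isRainbowIndepOn_of_private_vertex hsize hind ((hown a).2 rfl)
      fun j hja => ⟨fun h => hja ((hown j).1 h), fun h => hb ⟨j, h⟩⟩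

end Extension

lemma listNumber_neg {ι V : Type*} [Fintype ι] [DecidableEq V] [InvolutiveNeg V]
    (F : ι → Finset V) (v : V) : listNumber (fun j => -F j) v = listNumber F (-v) := by
  simp [listNumber, mem_neg']

/-- If `t ≥ 2n+1` and `n` independent `n`-sets of `C_t` have no rainbow independent
`n`-set, then no two adjacent vertices both have list number `1`. -/
theorem stmt5 (n t : ℕ) (ht : 2 * n + 1 ≤ t)
    (F : Fin n → Finset (ZMod t))
    (hF : ∀ i, (F i).card = n ∧ IsIndep (cyc t) (F i : Set (ZMod t)))
    (hno : ¬ RainbowIndep (cyc t) F n) :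
    ∀ i : ZMod t, (Finset.univ.filter (fun j => i ∈ F j)).card = 1 →
      2 ≤ (Finset.univ.filter (fun j => i - 1 ∈ F j)).card ∧
      2 ≤ (Finset.univ.filter (fun j => i + 1 ∈ F j)).card := by
  intro i hi
  have hsize : ∀ j, n ≤ (F j).card := fun j => (hF j).1.ge
  refine ⟨?_, ?_⟩ <;> by_contra! hlt
  · -- reflect the cycle through `0`, which turns `i - 1` into the successor of `-i`
    obtain ⟨x, hx⟩ := exists_isRainbowIndepOn_of_listNumber ht (F := fun j => -F j)
      (fun j => (card_neg (F j)).symm ▸ hsize j)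
      (fun j => by rw [coe_neg]; exact (hF j).2.preimage cycNeg.toHom) (i := -i)
      (by rwa [listNumber_neg, neg_neg])
      (by rw [listNumber_neg, show -(-i + 1) = i - 1 by ring]; unfold listNumber; omega)
    exact hno (hx.map cycNeg fun j _ v hv => mem_neg'.1 hv).rainbowIndep
  · obtain ⟨x, hx⟩ := exists_isRainbowIndepOn_of_listNumber ht hsize (fun j => (hF j).2) hi
      (by unfold listNumber; omega)
    exact hno hx.rainbowIndep
end

section
/- Let $W$ be a finite set, $V \subseteq W$, and let $\mathcal{I}$ be a collection of $n$ subsets of $W$, each of size at least $n$, such that $h(\mathcal{I}, V) = n$. Let $(V_1, V_2)$ be a partition of $V$ with $h(\mathcal{I}, V_i) = m_i$ for $i = 1, 2$. Then $m_1 + m_2 \ge n$, and for each $\ell \le m_1 + m_2 - n$ there exists a partition $(\mathcal{I}_1, \mathcal{I}_2)$ of $\mathcal{I}$ such that $h(\mathcal{I}_1, V_1) = m_1 - \ell$ and $h(\mathcal{I}_2, V_2) = n - m_1 + \ell$. -/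
/-!
Every member of `𝓘` meets `V` in at least `n` points, and this count splits between `V₁` and `V₂`.
At most `mⱼ` members meet `Vⱼ` in more than `mⱼ` points, so if `m₁ + m₂ < n` some member would
meet `V` in fewer than `n` points; hence `n ≤ m₁ + m₂`.

For the partition put `a = m₁ - ℓ` and `b = n - m₁ + ℓ`, so `a + b = n`, `a ≤ m₁`, `b ≤ m₂`.
At least `b` members meet `V₂` in `≥ b` points, so at most `a` members are "bad" for `V₂`, and each
bad member meets `V₁` in `≥ a` points. Fill the bad members up to `a` members that meet `V₁` in
`≥ a` points (there are at least `m₁ ≥ a` of those): this is `𝓘₁`, and its complement has `b`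
members meeting `V₂` in `≥ b` points. Since `h` never exceeds the size of the family, both values
are exact.
-/
open Finset

/-- `h(𝓘|_s, S)`: the largest `m` such that at least `m` of the sets `I i`, `i ∈ s`,
meet `S` in at least `m` elements. -/
noncomputable def hFun {α : Type*} [DecidableEq α] {k : ℕ} (I : Fin k → Finset α)
    (s : Finset (Fin k)) (S : Finset α) : ℕ :=
  sSup {m : ℕ | m ≤ (s.filter (fun i => m ≤ ((I i) ∩ S).card)).card}

section HFun

variable {α : Type*} [DecidableEq α] {k : ℕ} (I : Fin k → Finset α) (s : Finset (Fin k))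
  (S : Finset α)

private lemma bddAbove_hFun_set :
    BddAbove {m : ℕ | m ≤ #{i ∈ s | m ≤ #(I i ∩ S)}} :=
  ⟨#s, fun _ hm => hm.trans (card_filter_le _ _)⟩

lemma hFun_le_card_filter : hFun I s S ≤ #{i ∈ s | hFun I s S ≤ #(I i ∩ S)} :=
  Nat.sSup_mem (s := {m : ℕ | m ≤ #{i ∈ s | m ≤ #(I i ∩ S)}}) ⟨0, Nat.zero_le _⟩
    (bddAbove_hFun_set I s S)

variable {I s S} in
lemma le_hFun {m : ℕ} (hm : m ≤ #{i ∈ s | m ≤ #(I i ∩ S)}) : m ≤ hFun I s S :=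
  le_csSup (bddAbove_hFun_set I s S) hm

lemma hFun_le_card : hFun I s S ≤ #s :=
  (hFun_le_card_filter I s S).trans (card_filter_le _ _)

variable {I s S} in
lemma le_card_filter_of_le_hFun {m : ℕ} (hm : m ≤ hFun I s S) :
    m ≤ #{i ∈ s | m ≤ #(I i ∩ S)} :=
  (hm.trans (hFun_le_card_filter I s S)).trans <|
    card_le_card <| monotone_filter_right _ fun _ _ h => hm.trans h

lemma card_filter_hFun_lt_le : #{i ∈ s | hFun I s S < #(I i ∩ S)} ≤ hFun I s S := by
  by_contra! h
  exact (le_hFun (m := hFun I s S + 1) h).not_gt (Nat.lt_add_one _)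

variable {I s S} in
lemma hFun_eq_card (h : ∀ i ∈ s, #s ≤ #(I i ∩ S)) : hFun I s S = #s :=
  (hFun_le_card I s S).antisymm <| le_hFun <| by rw [filter_true_of_mem h]

variable {I s S} in
lemma card_le_of_hFun_eq_card (h : hFun I s S = #s) {i : Fin k} (hi : i ∈ s) :
    #s ≤ #(I i ∩ S) := by
  have hfull := hFun_le_card_filter I s S
  rw [h] at hfull
  exact card_filter_eq_iff.mp (hfull.antisymm' (card_filter_le _ _)) i hi

end HFun

lemma card_inter_add_card_inter_of_disjoint {α : Type*} [DecidableEq α] (A : Finset α)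
    {V₁ V₂ : Finset α} (hdisj : Disjoint V₁ V₂) :
    #(A ∩ V₁) + #(A ∩ V₂) = #(A ∩ (V₁ ∪ V₂)) := by
  rw [inter_union_distrib_left, card_union_of_disjoint]
  exact hdisj.mono inter_subset_right inter_subset_right

section Partition

variable {α : Type*} [DecidableEq α] {k : ℕ} {I : Fin k → Finset α} {s : Finset (Fin k)}
  {V₁ V₂ : Finset α}

lemma card_le_hFun_add_hFun (hdisj : Disjoint V₁ V₂)
    (hs : ∀ i ∈ s, #s ≤ #(I i ∩ (V₁ ∪ V₂))) :
    #s ≤ hFun I s V₁ + hFun I s V₂ := by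
  by_contra! hlt
  have hcover : s ⊆ {i ∈ s | hFun I s V₁ < #(I i ∩ V₁)} ∪
      {i ∈ s | hFun I s V₂ < #(I i ∩ V₂)} := by
    intro i hi
    have := hs i hi
    rw [← card_inter_add_card_inter_of_disjoint _ hdisj] at this
    simp only [mem_union, mem_filter, hi, true_and]
    omega
  have := (card_le_card hcover).trans (card_union_le _ _)
  have := card_filter_hFun_lt_le I s V₁
  have := card_filter_hFun_lt_le I s V₂
  omega

lemma exists_subset_hFun_eq_hFun_sdiff_eq (hdisj : Disjoint V₁ V₂) {a b : ℕ}
    (hs : ∀ i ∈ s, a + b ≤ #(I i ∩ (V₁ ∪ V₂))) (hcard : #s = a + b)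
    (ha : a ≤ hFun I s V₁) (hb : b ≤ hFun I s V₂) :
    ∃ u ⊆ s, hFun I u V₁ = a ∧ hFun I (s \ u) V₂ = b := by
  have hbad_card : #{i ∈ s | ¬ b ≤ #(I i ∩ V₂)} ≤ a := by
    have := card_filter_add_card_filter_not (s := s) (fun i => b ≤ #(I i ∩ V₂))
    have := le_card_filter_of_le_hFun hb
    omega
  have hbad_good : {i ∈ s | ¬ b ≤ #(I i ∩ V₂)} ⊆ {i ∈ s | a ≤ #(I i ∩ V₁)} := by
    intro i hi
    rw [mem_filter] at hi ⊢
    have := hs i hi.1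
    rw [← card_inter_add_card_inter_of_disjoint _ hdisj] at this
    exact ⟨hi.1, by omega⟩
  obtain ⟨u, hbad_u, hu_good, hu_card⟩ :=
    exists_subsuperset_card_eq hbad_good hbad_card (le_card_filter_of_le_hFun ha)
  have hu_s : u ⊆ s := hu_good.trans (filter_subset _ _)
  have hsdiff_card : #(s \ u) = b := by rw [card_sdiff_of_subset hu_s]; omega
  refine ⟨u, hu_s, ?_, ?_⟩
  · rw [← hu_card]
    exact hFun_eq_card fun i hi => hu_card ▸ (mem_filter.mp (hu_good hi)).2
  · rw [← hsdiff_card]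
    refine hFun_eq_card fun i hi => hsdiff_card ▸ ?_
    rw [mem_sdiff] at hi
    by_contra h
    exact hi.2 (hbad_u (mem_filter.mpr ⟨hi.1, h⟩))

end Partition

theorem stmt6_general {α : Type*} [DecidableEq α] (n : ℕ) (V : Finset α)
    (I : Fin n → Finset α)
    (hV : hFun I Finset.univ V = n)
    (V₁ V₂ : Finset α) (hpart : V₁ ∪ V₂ = V) (hdisj : Disjoint V₁ V₂)
    (m₁ m₂ : ℕ) (hm₁ : hFun I Finset.univ V₁ = m₁) (hm₂ : hFun I Finset.univ V₂ = m₂) :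
    n ≤ m₁ + m₂ ∧
    ∀ ℓ : ℕ, ℓ + n ≤ m₁ + m₂ →
      ∃ s : Finset (Fin n),
        hFun I s V₁ = m₁ - ℓ ∧ hFun I sᶜ V₂ = n - m₁ + ℓ := by
  have hall (i : Fin n) : n ≤ #(I i ∩ (V₁ ∪ V₂)) :=
    (card_fin n).symm.trans_le <|
      card_le_of_hFun_eq_card (by rw [hpart, hV, card_fin]) (mem_univ i)
  have hsum : n ≤ m₁ + m₂ := by
    have := card_le_hFun_add_hFun hdisj fun i _ => (card_fin n).trans_le (hall i)
    rwa [card_fin, hm₁, hm₂] at this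
  refine ⟨hsum, fun ℓ hℓ => ?_⟩
  have hm₁_le : m₁ ≤ n := hm₁ ▸ (hFun_le_card I univ V₁).trans_eq (card_fin n)
  have hm₂_le : m₂ ≤ n := hm₂ ▸ (hFun_le_card I univ V₂).trans_eq (card_fin n)
  obtain ⟨u, -, hu₁, hu₂⟩ := exists_subset_hFun_eq_hFun_sdiff_eq (I := I) (s := univ)
    (a := m₁ - ℓ) (b := n - m₁ + ℓ) hdisj (fun i _ => by have := hall i; omega)
    (by rw [card_fin]; omega) (by rw [hm₁]; omega) (by rw [hm₂]; omega)
  exact ⟨u, hu₁, by rwa [compl_eq_univ_sdiff]⟩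

/-- Lemma: if `h(𝓘,V) = n` and `(V₁,V₂)` partitions `V` with `h(𝓘,Vᵢ) = mᵢ`,
then `m₁ + m₂ ≥ n` and for each `ℓ ≤ m₁ + m₂ - n` there is a partition
`(𝓘₁,𝓘₂)` of `𝓘` with `h(𝓘₁,V₁) = m₁ - ℓ` and `h(𝓘₂,V₂) = n - m₁ + ℓ`. -/
theorem stmt6 {α : Type*} [DecidableEq α] (n : ℕ) (W V : Finset α) (hVW : V ⊆ W)
    (I : Fin n → Finset α) (hIW : ∀ i, I i ⊆ W) (hIcard : ∀ i, n ≤ (I i).card)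
    (hV : hFun I Finset.univ V = n)
    (V₁ V₂ : Finset α) (hpart : V₁ ∪ V₂ = V) (hdisj : Disjoint V₁ V₂)
    (m₁ m₂ : ℕ) (hm₁ : hFun I Finset.univ V₁ = m₁) (hm₂ : hFun I Finset.univ V₂ = m₂) :
    n ≤ m₁ + m₂ ∧
    ∀ ℓ : ℕ, ℓ + n ≤ m₁ + m₂ →
      ∃ s : Finset (Fin n),
        hFun I s V₁ = m₁ - ℓ ∧ hFun I sᶜ V₂ = n - m₁ + ℓ :=
  stmt6_general n V I hV V₁ V₂ hpart hdisj m₁ m₂ hm₁ hm₂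
end

section
/- Let $G$ be a 2-regular graph with $2n-1 \le |V(G)| \le 2n$. Then $f_G(n, n-1) = n-1$: every collection of $n-1$ independent $n$-sets of $G$ admits a rainbow independent $(n-1)$-set. -/
open Finset

set_option linter.unusedSectionVars false
set_option linter.unusedVariables false

section aux
variable {V : Type*} [Fintype V] [DecidableEq V] {G : SimpleGraph V} [DecidableRel G.Adj]

lemma reach_inv' (P : V → Prop) (h : ∀ u w, G.Adj u w → P u → P w) {u w : V}
    (hr : G.Reachable u w) : P u → P w := by
  obtain ⟨p⟩ := hr
  induction p with
  | nil => exact id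
  | cons ha _ ih => exact fun hu => ih (h _ _ ha hu)

lemma degcount (hreg : ∀ v : V, G.degree v = 2) {A B : Finset V}
    (hA : ∀ a ∈ A, ∀ u, G.Adj a u → u ∈ B)
    (hB : ∀ b ∈ B, ∀ u, G.Adj b u → u ∈ A) :
    A.card = B.card := by
  have key : ∀ (X Y : Finset V), (∀ a ∈ X, ∀ u, G.Adj a u → u ∈ Y) →
      ∑ a ∈ X, ∑ b ∈ Y, (if G.Adj a b then 1 else 0) = 2 * X.card := by
    intro X Y hXY
    have : ∀ a ∈ X, ∑ b ∈ Y, (if G.Adj a b then 1 else 0) = 2 := by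
      intro a ha
      have h1 : Y.filter (fun b => G.Adj a b) = G.neighborFinset a := by
        ext u
        simp only [mem_filter, SimpleGraph.mem_neighborFinset]
        exact ⟨fun h => h.2, fun h => ⟨hXY a ha u h, h⟩⟩
      calc ∑ b ∈ Y, (if G.Adj a b then 1 else 0)
          = (Y.filter (fun b => G.Adj a b)).card := (Finset.card_filter _ _).symm
        _ = 2 := by rw [h1, SimpleGraph.card_neighborFinset_eq_degree, hreg]
    rw [Finset.sum_congr rfl this, Finset.sum_const, smul_eq_mul, mul_comm]
  have e1 : ∑ a ∈ A, ∑ b ∈ B, (if G.Adj a b then 1 else 0) = 2 * A.card := key A B hA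
  have e2 : ∑ b ∈ B, ∑ a ∈ A, (if G.Adj b a then 1 else 0) = 2 * B.card := key B A hB
  have e3 : ∑ a ∈ A, ∑ b ∈ B, (if G.Adj a b then 1 else 0)
      = ∑ b ∈ B, ∑ a ∈ A, (if G.Adj b a then 1 else 0) := by
    rw [Finset.sum_comm]
    congr 1; ext b; congr 1; ext a
    simp [G.adj_comm]
  omega

lemma indep_compl (hreg : ∀ v : V, G.degree v = 2) {S : Finset V}
    (hS : IsIndep G (S : Set V)) (hcard : Fintype.card V ≤ 2 * S.card) :
    Fintype.card V = 2 * S.card ∧ IsIndep G ((Sᶜ : Finset V) : Set V) ∧ (Sᶜ : Finset V).card = S.card := by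
  have key : ∀ v ∈ S, ∑ u ∈ Sᶜ, (if G.Adj v u then 1 else 0) = 2 := by
    intro v hv
    have h1 : Sᶜ.filter (fun u => G.Adj v u) = G.neighborFinset v := by
      ext u
      simp only [mem_filter, SimpleGraph.mem_neighborFinset, Finset.mem_compl]
      refine ⟨fun h => h.2, fun h => ⟨fun hu => hS v hv u hu h, h⟩⟩
    calc ∑ u ∈ Sᶜ, (if G.Adj v u then 1 else 0)
        = (Sᶜ.filter (fun u => G.Adj v u)).card := (Finset.card_filter _ _).symm
      _ = 2 := by rw [h1, SimpleGraph.card_neighborFinset_eq_degree, hreg]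
  have e1 : ∑ v ∈ S, ∑ u ∈ Sᶜ, (if G.Adj v u then 1 else 0) = 2 * S.card := by
    rw [Finset.sum_congr rfl key, Finset.sum_const, smul_eq_mul, mul_comm]
  have e2 : ∑ v ∈ S, ∑ u ∈ Sᶜ, (if G.Adj v u then 1 else 0)
      = ∑ u ∈ Sᶜ, (S.filter (fun v => G.Adj v u)).card := by
    rw [Finset.sum_comm]
    exact Finset.sum_congr rfl (fun u _ => (Finset.card_filter _ _).symm)
  have hle : ∀ u, (S.filter (fun v => G.Adj v u)).card ≤ 2 := by
    intro u
    have : S.filter (fun v => G.Adj v u) ⊆ G.neighborFinset u := by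
      intro v hv
      simp only [mem_filter] at hv
      rw [SimpleGraph.mem_neighborFinset]
      exact hv.2.symm
    calc (S.filter (fun v => G.Adj v u)).card ≤ (G.neighborFinset u).card := Finset.card_le_card this
      _ = 2 := by rw [SimpleGraph.card_neighborFinset_eq_degree, hreg]
  have e3 : ∑ u ∈ Sᶜ, (S.filter (fun v => G.Adj v u)).card ≤ 2 * Sᶜ.card := by
    calc ∑ u ∈ Sᶜ, (S.filter (fun v => G.Adj v u)).card ≤ ∑ u ∈ Sᶜ, 2 :=
        Finset.sum_le_sum (fun u _ => hle u)
      _ = 2 * Sᶜ.card := by rw [Finset.sum_const, smul_eq_mul, mul_comm]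
  have hcards : S.card + Sᶜ.card = Fintype.card V := by
    rw [Finset.card_add_card_compl]
  have hSle : S.card ≤ Sᶜ.card := by omega
  have hVeq : Fintype.card V = 2 * S.card := by omega
  have hCeq : Sᶜ.card = S.card := by omega
  refine ⟨hVeq, ?_, hCeq⟩
  -- equality forces each term = 2
  have hall : ∀ u ∈ Sᶜ, (S.filter (fun v => G.Adj v u)).card = 2 := by
    by_contra hco
    push_neg at hco
    obtain ⟨u, hu, hne⟩ := hco
    have hlt : (S.filter (fun v => G.Adj v u)).card < 2 := lt_of_le_of_ne (hle u) hne
    have : ∑ u ∈ Sᶜ, (S.filter (fun v => G.Adj v u)).card < ∑ u ∈ Sᶜ, 2 :=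
      Finset.sum_lt_sum (fun i _ => hle i) ⟨u, hu, hlt⟩
    rw [Finset.sum_const, smul_eq_mul, mul_comm] at this
    omega
  intro a ha b hb hab
  simp only [Finset.coe_compl, Set.mem_compl_iff, Finset.mem_coe] at ha hb
  have haC : a ∈ Sᶜ := by simpa using ha
  have h2 : S.filter (fun v => G.Adj v a) = G.neighborFinset a := by
    apply Finset.eq_of_subset_of_card_le
    · intro v hv
      simp only [mem_filter] at hv
      rw [SimpleGraph.mem_neighborFinset]
      exact hv.2.symm
    · rw [SimpleGraph.card_neighborFinset_eq_degree, hreg, hall a haC]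
  have : b ∈ S.filter (fun v => G.Adj v a) := by
    rw [h2, SimpleGraph.mem_neighborFinset]
    exact hab
  exact hb (Finset.mem_filter.mp this).1

end aux

lemma exists_injOn_finset {α W : Type*} [DecidableEq α] [DecidableEq W] [Nonempty W]
    (s : Finset α) (t : Finset W) (h : s.card ≤ t.card) :
    ∃ f : α → W, Set.InjOn f ↑s ∧ ∀ i ∈ s, f i ∈ t := by
  obtain ⟨Z, hZt, hZ⟩ := Finset.exists_subset_card_eq h
  have e : {x // x ∈ s} ≃ {x // x ∈ Z} := Finset.equivOfCardEq hZ.symm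
  refine ⟨fun a => if h : a ∈ s then (e ⟨a, h⟩ : W) else Classical.arbitrary W, ?_, ?_⟩
  · intro a ha b hb hfab
    simp only [Finset.mem_coe] at ha hb
    dsimp only at hfab
    rw [dif_pos ha, dif_pos hb] at hfab
    have := e.injective (Subtype.ext hfab)
    exact congrArg Subtype.val this
  · intro i hi
    dsimp only
    rw [dif_pos hi]
    exact hZt (e ⟨i, hi⟩).2

lemma glue {α W κ : Type*} [Fintype α] [DecidableEq α] [DecidableEq W] [DecidableEq κ] [Nonempty W]
    (τ : α → κ) (Y : κ → Finset W)
    (hcard : ∀ k, (Finset.univ.filter (fun i => τ i = k)).card ≤ (Y k).card)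
    (hdisj : ∀ k k', k ≠ k' → Disjoint (Y k) (Y k')) :
    ∃ x : α → W, Function.Injective x ∧ ∀ i, x i ∈ Y (τ i) := by
  have hch : ∀ k : κ, ∃ f : α → W, Set.InjOn f ↑(Finset.univ.filter (fun i => τ i = k)) ∧
      ∀ i ∈ Finset.univ.filter (fun i => τ i = k), f i ∈ Y k :=
    fun k => exists_injOn_finset _ _ (hcard k)
  choose f hfinj hfmem using hch
  refine ⟨fun i => f (τ i) i, ?_, ?_⟩
  · intro i i' heq
    dsimp only at heq
    have hY : f (τ i) i ∈ Y (τ i) := hfmem _ i (by simp)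
    have hY' : f (τ i') i' ∈ Y (τ i') := hfmem _ i' (by simp)
    have hττ : τ i = τ i' := by
      by_contra hne
      have hd := Finset.disjoint_left.mp (hdisj _ _ hne) hY
      rw [heq] at hd
      exact hd hY'
    rw [← hττ] at heq
    have hmi : i ∈ Finset.univ.filter (fun j => τ j = τ i) := by simp
    have hmi' : i' ∈ Finset.univ.filter (fun j => τ j = τ i) := by simp [hττ]
    exact hfinj (τ i) (Finset.mem_coe.mpr hmi) (Finset.mem_coe.mpr hmi') heq
  · intro i
    exact hfmem _ i (by simp)

lemma assign {ι α : Type*} [DecidableEq ι] [DecidableEq α] (cap : ι → ℕ) (p : α → ι → Bool) :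
    ∀ (s : Finset ι), s.Nonempty → ∀ (I : Finset α), (∀ j ∈ s, 1 ≤ cap j) →
    I.card + 1 = ∑ j ∈ s, cap j →
    ∃ (σ : α → ι) (js : ι), js ∈ s ∧ (∀ i ∈ I, σ i ∈ s) ∧
      (∀ j ∈ s, j ≠ js → (I.filter (fun i => σ i = j)).card = cap j ∧
        ∃ e : Bool, ∀ i ∈ I, σ i = j → p i j = e) ∧
      (I.filter (fun i => σ i = js)).card + 1 = cap js := by
  intro s
  induction s using Finset.strongInduction with
  | _ s ih =>
    intro hne I hcap hsum
    obtain ⟨j0, hj0s, hj0min⟩ := Finset.exists_min_image s cap hne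
    by_cases h1 : s.card = 1
    · obtain ⟨a, ha⟩ := Finset.card_eq_one.mp h1
      subst ha
      refine ⟨fun _ => a, a, Finset.mem_singleton_self a, fun i _ => Finset.mem_singleton_self a,
        ?_, ?_⟩
      · intro j hj hja
        exact absurd (Finset.mem_singleton.mp hj) hja
      · rw [Finset.filter_true_of_mem (fun i _ => rfl)]
        simpa using hsum
    · have h2 : 2 ≤ s.card := by
        have := Finset.card_pos.mpr hne
        omega
      obtain ⟨a, ha, b, hb, hab⟩ := Finset.one_lt_card.mp h2
      have hj1 : ∃ j1 ∈ s, j1 ≠ j0 := by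
        by_cases h : a = j0
        · exact ⟨b, hb, fun hbj => hab (h.trans hbj.symm)⟩
        · exact ⟨a, ha, h⟩
      obtain ⟨j1, hj1s, hj1ne⟩ := hj1
      have hsum2 : cap j0 + cap j1 ≤ ∑ j ∈ s, cap j := by
        have hsub : {j0, j1} ⊆ s := by
          intro z hz
          rcases Finset.mem_insert.mp hz with h | h
          · exact h ▸ hj0s
          · exact (Finset.mem_singleton.mp h) ▸ hj1s
        calc cap j0 + cap j1 = ∑ j ∈ ({j0, j1} : Finset ι), cap j := by
              rw [Finset.sum_pair (fun h => hj1ne h.symm)]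
          _ ≤ ∑ j ∈ s, cap j := Finset.sum_le_sum_of_subset hsub
      have hmin01 : cap j0 ≤ cap j1 := hj0min j1 hj1s
      have hIc : 2 * cap j0 ≤ I.card + 1 := by omega
      -- pigeonhole
      have hsplit : (I.filter (fun i => p i j0 = true)).card
          + (I.filter (fun i => ¬ (p i j0 = true))).card = I.card :=
        Finset.card_filter_add_card_filter_not _
      have hpig : ∃ e : Bool, cap j0 ≤ (I.filter (fun i => p i j0 = e)).card := by
        by_cases h : cap j0 ≤ (I.filter (fun i => p i j0 = true)).card
        · exact ⟨true, h⟩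
        · refine ⟨false, ?_⟩
          have : I.filter (fun i => p i j0 = false) = I.filter (fun i => ¬ (p i j0 = true)) := by
            apply Finset.filter_congr
            intro i _
            simp
          rw [this]
          omega
      obtain ⟨e0, he0⟩ := hpig
      obtain ⟨I0, hI0sub, hI0card⟩ := Finset.exists_subset_card_eq he0
      have hI0I : I0 ⊆ I := hI0sub.trans (Finset.filter_subset _ _)
      have hI0p : ∀ i ∈ I0, p i j0 = e0 := fun i hi => (Finset.mem_filter.mp (hI0sub hi)).2
      -- recurse
      have hss : s.erase j0 ⊂ s := Finset.erase_ssubset hj0s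
      have hne' : (s.erase j0).Nonempty := ⟨j1, Finset.mem_erase.mpr ⟨hj1ne, hj1s⟩⟩
      have hcap' : ∀ j ∈ s.erase j0, 1 ≤ cap j := fun j hj => hcap j (Finset.mem_of_mem_erase hj)
      have hcapj0 : 1 ≤ cap j0 := hcap j0 hj0s
      have hcard' : (I \ I0).card = I.card - cap j0 := by
        rw [Finset.card_sdiff_of_subset hI0I, hI0card]
      have hsum' : (I \ I0).card + 1 = ∑ j ∈ s.erase j0, cap j := by
        have := Finset.sum_erase_add s cap hj0s
        have hle : cap j0 ≤ I.card := by omega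
        omega
      obtain ⟨σ', js, hjs, hσ's, hpure', hmix'⟩ := ih _ hss hne' (I \ I0) hcap' hsum'
      have hjsne : js ≠ j0 := (Finset.mem_erase.mp hjs).1
      set σn : α → ι := fun i => if i ∈ I0 then j0 else σ' i with hσndef
      have hσnval : ∀ i, σn i = if i ∈ I0 then j0 else σ' i := fun i => rfl
      have hfib0 : I.filter (fun i => σn i = j0) = I0 := by
        ext i
        simp only [Finset.mem_filter, hσnval]
        constructor
        · rintro ⟨hiI, hσ⟩
          by_contra h
          rw [if_neg h] at hσ
          have := hσ's i (Finset.mem_sdiff.mpr ⟨hiI, h⟩)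
          rw [hσ] at this
          exact (Finset.mem_erase.mp this).1 rfl
        · intro h
          exact ⟨hI0I h, if_pos h⟩
      have hnotin : ∀ i ∈ I, ∀ j, j ≠ j0 → σn i = j → i ∉ I0 := by
        intro i hiI j hjne hσ
        intro h
        rw [hσnval, if_pos h] at hσ
        exact hjne hσ.symm
      have hfib : ∀ j, j ≠ j0 → I.filter (fun i => σn i = j)
          = (I \ I0).filter (fun i => σ' i = j) := by
        intro j hjne
        ext i
        simp only [Finset.mem_filter, Finset.mem_sdiff]
        constructor
        · rintro ⟨hiI, hσ⟩
          have hni : i ∉ I0 := hnotin i hiI j hjne hσ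
          rw [hσnval, if_neg hni] at hσ
          exact ⟨⟨hiI, hni⟩, hσ⟩
        · rintro ⟨⟨hiI, h⟩, hσ⟩
          exact ⟨hiI, by rw [hσnval, if_neg h]; exact hσ⟩
      refine ⟨σn, js, Finset.mem_of_mem_erase hjs, ?_, ?_, ?_⟩
      · intro i hi
        by_cases h : i ∈ I0
        · rw [hσnval, if_pos h]; exact hj0s
        · rw [hσnval, if_neg h]
          exact Finset.mem_of_mem_erase (hσ's i (Finset.mem_sdiff.mpr ⟨hi, h⟩))
      · intro j hj hjne
        by_cases h : j = j0
        · rw [h, hfib0]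
          refine ⟨hI0card, e0, ?_⟩
          intro i hiI hσ
          have hi0 : i ∈ I0 := by
            have : i ∈ I.filter (fun i => σn i = j0) := Finset.mem_filter.mpr ⟨hiI, hσ⟩
            rwa [hfib0] at this
          exact hI0p i hi0
        · rw [hfib j h]
          obtain ⟨hc, e, he⟩ := hpure' j (Finset.mem_erase.mpr ⟨h, hj⟩) hjne
          refine ⟨hc, e, ?_⟩
          intro i hiI hσ
          have hni : i ∉ I0 := hnotin i hiI j h hσ
          rw [hσnval, if_neg hni] at hσ
          exact he i (Finset.mem_sdiff.mpr ⟨hiI, hni⟩) hσ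
      · rw [hfib js hjsne]
        exact hmix'

lemma mixed_indep {V : Type*} [Fintype V] [DecidableEq V] {G : SimpleGraph V} [DecidableRel G.Adj]
    (hreg : ∀ v : V, G.degree v = 2) (C A B : Finset V)
    (hd : Disjoint A B)
    (hA : ∀ a ∈ A, ∀ u, G.Adj a u → u ∈ B)
    (hB : ∀ b ∈ B, ∀ u, G.Adj b u → u ∈ A)
    (hBC : B ⊆ C)
    (hconn : ∀ u ∈ C, ∀ w ∈ C, G.Reachable u w)
    (hBA : B.card = A.card)
    (a b : ℕ) (hab : a + b + 1 ≤ A.card) :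
    ∃ S : Finset V, IsIndep G (S : Set V) ∧ a ≤ (S ∩ A).card ∧ b ≤ (S ∩ B).card := by
  have hAind : ∀ x ∈ A, ∀ y ∈ A, ¬ G.Adj x y := by
    intro x hx y hy hadj
    exact Finset.disjoint_left.mp hd hy (hA x hx y hadj)
  have hBind : ∀ x ∈ B, ∀ y ∈ B, ¬ G.Adj x y := by
    intro x hx y hy hadj
    exact Finset.disjoint_left.mp hd (hB x hx y hadj) hy
  by_cases hb0 : b = 0
  · refine ⟨A, ?_, ?_, ?_⟩
    · intro x hx y hy
      exact hAind x (Finset.mem_coe.mp hx) y (Finset.mem_coe.mp hy)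
    · rw [Finset.inter_self]; omega
    · omega
  -- b ≥ 1
  set NT : Finset V → Finset V := fun T => A.filter (fun x => ∃ t ∈ T, G.Adj x t) with hNTdef
  have greedy : ∀ m : ℕ, 1 ≤ m → m + 1 ≤ A.card →
      ∃ T : Finset V, T ⊆ B ∧ T.card = m ∧ T.Nonempty ∧ (NT T).card ≤ m + 1 := by
    intro m
    induction m with
    | zero => omega
    | succ m ihm =>
      intro _ hmA
      by_cases hm0 : m = 0
      · subst hm0
        have hBne : B.Nonempty := by
          rw [← Finset.card_pos, hBA]; omega
        obtain ⟨t0, ht0⟩ := hBne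
        refine ⟨{t0}, by simpa using ht0, by simp, ⟨t0, by simp⟩, ?_⟩
        have hsub : NT {t0} ⊆ G.neighborFinset t0 := by
          intro x hx
          simp only [hNTdef, Finset.mem_filter, Finset.mem_singleton] at hx
          obtain ⟨-, t, rfl, hadj⟩ := hx
          rw [SimpleGraph.mem_neighborFinset]
          exact hadj.symm
        calc (NT {t0}).card ≤ (G.neighborFinset t0).card := Finset.card_le_card hsub
          _ ≤ 2 := by rw [SimpleGraph.card_neighborFinset_eq_degree, hreg]
      · obtain ⟨T, hTB, hTcard, hTne, hNTcard⟩ := ihm (by omega) (by omega)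
        -- find u ∈ B \ T adjacent to NT T
        have hu : ∃ u ∈ B, u ∉ T ∧ ∃ x ∈ NT T, G.Adj u x := by
          by_contra hco
          push_neg at hco
          have hclosed : ∀ p ∈ T ∪ NT T, ∀ q, G.Adj p q → q ∈ T ∪ NT T := by
            intro p hp q hadj
            rcases Finset.mem_union.mp hp with hpT | hpN
            · apply Finset.mem_union_right
              simp only [hNTdef, Finset.mem_filter]
              exact ⟨hB p (hTB hpT) q hadj, p, hpT, hadj.symm⟩
            · have hpA : p ∈ A := (Finset.mem_filter.mp hpN).1
              have hqB : q ∈ B := hA p hpA q hadj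
              by_cases hqT : q ∈ T
              · exact Finset.mem_union_left _ hqT
              · exact absurd hadj.symm (hco q hqB hqT p hpN)
          obtain ⟨t0, ht0T⟩ := hTne
          have ht0C : t0 ∈ C := hBC (hTB ht0T)
          have hCK : ∀ w ∈ C, w ∈ T ∪ NT T := by
            intro w hw
            exact reach_inv' (fun v => v ∈ T ∪ NT T)
              (fun u w hadj hu => hclosed u hu w hadj)
              (hconn t0 ht0C w hw) (Finset.mem_union_left _ ht0T)
          have hBT : B ⊆ T := by
            intro u huB
            rcases Finset.mem_union.mp (hCK u (hBC huB)) with h | h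
            · exact h
            · exact absurd ((Finset.mem_filter.mp h).1) (fun hA' => Finset.disjoint_left.mp hd hA' huB)
          have : B.card ≤ T.card := Finset.card_le_card hBT
          omega
        obtain ⟨u, huB, huT, x0, hx0N, hadjux0⟩ := hu
        refine ⟨insert u T, ?_, ?_, ⟨u, Finset.mem_insert_self u T⟩, ?_⟩
        · intro z hz
          rcases Finset.mem_insert.mp hz with rfl | hz
          · exact huB
          · exact hTB hz
        · rw [Finset.card_insert_of_notMem huT, hTcard]
        · have hsub : NT (insert u T) ⊆ NT T ∪ (G.neighborFinset u).erase x0 := by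
            intro x hx
            simp only [hNTdef, Finset.mem_filter] at hx
            obtain ⟨hxA, t, ht, hadj⟩ := hx
            rcases Finset.mem_insert.mp ht with rfl | htT
            · by_cases hxx0 : x = x0
              · subst hxx0
                exact Finset.mem_union_left _ hx0N
              · apply Finset.mem_union_right
                rw [Finset.mem_erase]
                exact ⟨hxx0, by rw [SimpleGraph.mem_neighborFinset]; exact hadj.symm⟩
            · exact Finset.mem_union_left _ (by
                simp only [hNTdef, Finset.mem_filter]
                exact ⟨hxA, t, htT, hadj⟩)
          have hx0nb : x0 ∈ G.neighborFinset u := by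
            rw [SimpleGraph.mem_neighborFinset]; exact hadjux0
          have h1 : ((G.neighborFinset u).erase x0).card = 1 := by
            rw [Finset.card_erase_of_mem hx0nb, SimpleGraph.card_neighborFinset_eq_degree, hreg]
          calc (NT (insert u T)).card ≤ (NT T ∪ (G.neighborFinset u).erase x0).card :=
              Finset.card_le_card hsub
            _ ≤ (NT T).card + ((G.neighborFinset u).erase x0).card := Finset.card_union_le _ _
            _ ≤ (m + 1) + 1 := by omega
  obtain ⟨T, hTB, hTcard, hTne, hNTcard⟩ := greedy b (by omega) (by omega)
  refine ⟨T ∪ (A \ NT T), ?_, ?_, ?_⟩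
  · intro x hx y hy hadj
    simp only [Finset.coe_union, Set.mem_union, Finset.mem_coe, Finset.mem_sdiff] at hx hy
    rcases hx with hxT | ⟨hxA, hxN⟩ <;> rcases hy with hyT | ⟨hyA, hyN⟩
    · exact hBind x (hTB hxT) y (hTB hyT) hadj
    · exact hyN (by simp only [hNTdef, Finset.mem_filter]; exact ⟨hyA, x, hxT, hadj.symm⟩)
    · exact hxN (by simp only [hNTdef, Finset.mem_filter]; exact ⟨hxA, y, hyT, hadj⟩)
    · exact hAind x hxA y hyA hadj
  · have hsub : A \ NT T ⊆ (T ∪ (A \ NT T)) ∩ A := by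
      intro x hx
      rw [Finset.mem_inter]
      exact ⟨Finset.mem_union_right _ hx, (Finset.mem_sdiff.mp hx).1⟩
    have h1 : (NT T) ⊆ A := Finset.filter_subset _ _
    have h2 : (A \ NT T).card = A.card - (NT T).card := Finset.card_sdiff_of_subset h1
    have h3 : (NT T).card ≤ A.card := Finset.card_le_card h1
    have := Finset.card_le_card hsub
    omega
  · have hsub : T ⊆ (T ∪ (A \ NT T)) ∩ B := by
      intro x hx
      rw [Finset.mem_inter]
      exact ⟨Finset.mem_union_left _ hx, hTB hx⟩
    have := Finset.card_le_card hsub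
    omega

/-- `f_G(n, n-1) = n-1` for 2-regular graphs `G` with `2n-1 ≤ |V(G)| ≤ 2n`. -/
theorem stmt8 {V : Type*} [Fintype V] [DecidableEq V]
    (G : SimpleGraph V) [DecidableRel G.Adj] (n : ℕ)
    (hreg : ∀ v : V, G.degree v = 2)
    (hlo : 2 * n - 1 ≤ Fintype.card V) (hhi : Fintype.card V ≤ 2 * n)
    (F : Fin (n - 1) → Finset V)
    (hF : ∀ i, (F i).card = n ∧ IsIndep G (F i : Set V)) :
    RainbowIndep G F (n - 1) := by
  classical
  by_cases hn2 : n ≤ 1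
  · refine ⟨∅, fun i => absurd i.isLt (by omega), ?_, ?_, ?_, ?_⟩
    · simp only [Finset.card_empty]; omega
    · simp
    · simp only [Finset.image_empty, Finset.card_empty]; omega
    · intro a ha
      simp at ha
  push_neg at hn2
  have hn : 2 ≤ n := hn2
  have i0 : Fin (n - 1) := ⟨0, by omega⟩
  have hCompl : ∀ i : Fin (n-1), Fintype.card V = 2 * n ∧
      IsIndep G (((F i)ᶜ : Finset V) : Set V) ∧ ((F i)ᶜ : Finset V).card = n := by
    intro i
    have h := indep_compl hreg (hF i).2 (by rw [(hF i).1]; exact hhi)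
    rw [(hF i).1] at h
    exact h
  have hVcard : Fintype.card V = 2 * n := (hCompl i0).1
  have hVne : Nonempty V := by
    rw [← Fintype.card_pos_iff]
    omega
  have hflip : ∀ (i : Fin (n-1)) (u w : V), G.Adj u w → (u ∈ F i ↔ w ∉ F i) := by
    intro i u w hadj
    constructor
    · intro hu hw
      exact (hF i).2 u (Finset.mem_coe.mpr hu) w (Finset.mem_coe.mpr hw) hadj
    · intro hw
      by_contra hu
      exact (hCompl i).2.1 u (by simp [hu]) w (by simp [hw]) hadj
  -- components
  letI : Fintype G.ConnectedComponent := Fintype.ofFinite _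
  set mk : V → G.ConnectedComponent := G.connectedComponentMk with hmkdef
  have hadjmk : ∀ u w : V, G.Adj u w → mk u = mk w :=
    fun u w h => SimpleGraph.ConnectedComponent.sound h.reachable
  have hmkreach : ∀ u w : V, mk u = mk w → G.Reachable u w :=
    fun u w h => SimpleGraph.ConnectedComponent.exact h
  have hrep : ∀ j : G.ConnectedComponent, ∃ v, mk v = j := fun j => Quot.exists_rep j
  choose rep hrepmk using hrep
  set comp : G.ConnectedComponent → Finset V :=
    fun j => Finset.univ.filter (fun v => mk v = j) with hcompdef
  have hmemcomp : ∀ j v, v ∈ comp j ↔ mk v = j := by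
    intro j v; simp [hcompdef]
  -- the side function
  set p : Fin (n-1) → G.ConnectedComponent → Bool :=
    fun i j => decide (rep j ∈ F i ↔ rep j ∈ F i0) with hpdef
  have hstep : ∀ i : Fin (n-1), ∀ u w : V, G.Adj u w →
      ((u ∈ F i ↔ u ∈ F i0) → (w ∈ F i ↔ w ∈ F i0)) := by
    intro i u w hadj h
    have h1 := hflip i u w hadj
    have h2 := hflip i0 u w hadj
    tauto
  have hstep' : ∀ i : Fin (n-1), ∀ u w : V, G.Adj u w →
      ((u ∈ F i ↔ u ∉ F i0) → (w ∈ F i ↔ w ∉ F i0)) := by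
    intro i u w hadj h
    have h1 := hflip i u w hadj
    have h2 := hflip i0 u w hadj
    tauto
  have hptrue : ∀ (i : Fin (n-1)) j, p i j = true → ∀ v, mk v = j → (v ∈ F i ↔ v ∈ F i0) := by
    intro i j hp v hv
    have h0 : rep j ∈ F i ↔ rep j ∈ F i0 := of_decide_eq_true hp
    exact reach_inv' (fun z => z ∈ F i ↔ z ∈ F i0) (hstep i)
      (hmkreach _ _ ((hrepmk j).trans hv.symm)) h0
  have hpfalse : ∀ (i : Fin (n-1)) j, p i j = false → ∀ v, mk v = j → (v ∈ F i ↔ v ∉ F i0) := by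
    intro i j hp v hv
    have h0 : rep j ∈ F i ↔ rep j ∉ F i0 := by
      have := of_decide_eq_false hp
      tauto
    exact reach_inv' (fun z => z ∈ F i ↔ z ∉ F i0) (hstep' i)
      (hmkreach _ _ ((hrepmk j).trans hv.symm)) h0
  -- classes
  set A : G.ConnectedComponent → Finset V := fun j => (comp j).filter (fun v => v ∈ F i0) with hAdef
  set B : G.ConnectedComponent → Finset V := fun j => (comp j).filter (fun v => v ∉ F i0) with hBdef
  have hmemA : ∀ j v, v ∈ A j ↔ (mk v = j ∧ v ∈ F i0) := by
    intro j v; simp [hAdef, hcompdef]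
  have hmemB : ∀ j v, v ∈ B j ↔ (mk v = j ∧ v ∉ F i0) := by
    intro j v; simp [hBdef, hcompdef]
  have hABadj : ∀ j, ∀ a ∈ A j, ∀ u, G.Adj a u → u ∈ B j := by
    intro j a ha u hadj
    rw [hmemA] at ha
    rw [hmemB]
    exact ⟨(hadjmk a u hadj).symm.trans ha.1, (hflip i0 a u hadj).mp ha.2⟩
  have hBAadj : ∀ j, ∀ b ∈ B j, ∀ u, G.Adj b u → u ∈ A j := by
    intro j b hb u hadj
    rw [hmemB] at hb
    rw [hmemA]
    exact ⟨(hadjmk b u hadj).symm.trans hb.1, (hflip i0 u b hadj.symm).mpr hb.2⟩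
  have hABcard : ∀ j, (A j).card = (B j).card :=
    fun j => degcount hreg (hABadj j) (hBAadj j)
  have hcompsplit : ∀ j, (comp j).card = 2 * (A j).card := by
    intro j
    have h : (A j).card + (B j).card = (comp j).card := by
      rw [hAdef, hBdef]
      exact Finset.card_filter_add_card_filter_not (s := comp j)
        (p := fun v => v ∈ F i0)
    have h2 := hABcard j
    omega
  have hcap1 : ∀ j, 1 ≤ (A j).card := by
    intro j
    have h1 : rep j ∈ comp j := (hmemcomp j (rep j)).mpr (hrepmk j)
    have h2 : 1 ≤ (comp j).card := Finset.card_pos.mpr ⟨rep j, h1⟩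
    have := hcompsplit j
    omega
  have hsumcomp : ∑ j, (comp j).card = Fintype.card V := by
    rw [← Finset.card_univ]
    exact (Finset.card_eq_sum_card_fiberwise (fun v _ => Finset.mem_univ (mk v))).symm
  have hsumcap : ∑ j, (A j).card = n := by
    have h1 : ∑ j, (comp j).card = ∑ j, 2 * (A j).card :=
      Finset.sum_congr rfl (fun j _ => hcompsplit j)
    rw [← Finset.mul_sum] at h1
    omega
  -- assignment
  have hccne : (Finset.univ : Finset G.ConnectedComponent).Nonempty :=
    ⟨mk (Classical.arbitrary V), Finset.mem_univ _⟩
  have hIcard : (Finset.univ : Finset (Fin (n-1))).card + 1 = ∑ j, (A j).card := by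
    rw [Finset.card_univ, Fintype.card_fin, hsumcap]
    omega
  obtain ⟨σ, js, hjss, -, hpure, hmix⟩ :=
    assign (fun j => (A j).card) p Finset.univ hccne Finset.univ (fun j _ => hcap1 j) hIcard
  -- split the mixed fiber
  have h1 := Finset.card_filter_add_card_filter_not
    (s := Finset.univ.filter (fun i : Fin (n-1) => σ i = js)) (p := fun i => p i js = true)
  rw [Finset.filter_filter, Finset.filter_filter] at h1
  have h2 : (Finset.univ.filter (fun i : Fin (n-1) => σ i = js ∧ ¬ p i js = true))
      = Finset.univ.filter (fun i : Fin (n-1) => σ i = js ∧ p i js = false) := by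
    apply Finset.filter_congr
    intro i _
    simp
  rw [h2] at h1
  rw [← h1] at hmix
  -- hmix : a0 + b0 + 1 = (A js).card
  have hdisjAB : ∀ j, Disjoint (A j) (B j) := by
    intro j
    rw [Finset.disjoint_left]
    intro v hv hv'
    exact ((hmemB j v).mp hv').2 ((hmemA j v).mp hv).2
  obtain ⟨S, hSind, hSA, hSB⟩ := mixed_indep hreg (comp js) (A js) (B js) (hdisjAB js)
    (hABadj js) (hBAadj js) (by rw [hBdef]; exact Finset.filter_subset _ _)
    (fun u hu w hw => hmkreach u w (((hmemcomp js u).mp hu).trans ((hmemcomp js w).mp hw).symm))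
    (hABcard js).symm
    (Finset.univ.filter (fun i : Fin (n-1) => σ i = js ∧ p i js = true)).card
    (Finset.univ.filter (fun i : Fin (n-1) => σ i = js ∧ p i js = false)).card
    (le_of_eq hmix)
  -- gluing setup
  set τ : Fin (n-1) → G.ConnectedComponent × Bool := fun i => (σ i, p i (σ i)) with hτdef
  set Y : G.ConnectedComponent × Bool → Finset V := fun k =>
    if k.1 = js then (if k.2 then S ∩ A js else S ∩ B js)
    else (if k.2 then A k.1 else B k.1) with hYdef
  have hYmem : ∀ (k : G.ConnectedComponent × Bool) (v : V), v ∈ Y k →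
      (mk v = k.1 ∧ (k.2 = true → v ∈ F i0) ∧ (k.2 = false → v ∉ F i0) ∧
        (k.1 = js → v ∈ S)) := by
    rintro ⟨j, e⟩ v hv
    rw [hYdef] at hv
    dsimp only at hv ⊢
    split_ifs at hv with hj he he
    · rw [Finset.mem_inter, hmemA] at hv
      refine ⟨hv.2.1.trans hj.symm, fun _ => hv.2.2, fun hf => ?_, fun _ => hv.1⟩
      rw [hf] at he; simp at he
    · rw [Finset.mem_inter, hmemB] at hv
      refine ⟨hv.2.1.trans hj.symm, fun ht => ?_, fun _ => hv.2.2, fun _ => hv.1⟩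
      rw [ht] at he; exact absurd rfl he
    · rw [hmemA] at hv
      refine ⟨hv.1, fun _ => hv.2, fun hf => ?_, fun h => absurd h hj⟩
      rw [hf] at he; simp at he
    · rw [hmemB] at hv
      refine ⟨hv.1, fun ht => ?_, fun _ => hv.2, fun h => absurd h hj⟩
      rw [ht] at he; exact absurd rfl he
  have hτfib : ∀ (j : G.ConnectedComponent) (e : Bool),
      Finset.univ.filter (fun i : Fin (n-1) => τ i = (j, e))
        = Finset.univ.filter (fun i : Fin (n-1) => σ i = j ∧ p i j = e) := by
    intro j e
    apply Finset.filter_congr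
    intro i _
    rw [hτdef]
    dsimp only
    rw [Prod.mk.injEq]
    constructor
    · rintro ⟨h1, h2⟩
      exact ⟨h1, by rw [← h1]; exact h2⟩
    · rintro ⟨h1, h2⟩
      exact ⟨h1, by rw [h1]; exact h2⟩
  have hYcap : ∀ k : G.ConnectedComponent × Bool,
      (Finset.univ.filter (fun i => τ i = k)).card ≤ (Y k).card := by
    rintro ⟨j, e⟩
    rw [hτfib j e, hYdef]
    dsimp only
    by_cases hj : j = js
    · subst hj
      rw [if_pos rfl]
      cases e
      · rw [if_neg (by simp)]
        exact hSB
      · rw [if_pos rfl]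
        exact hSA
    · rw [if_neg hj]
      have hsub : Finset.univ.filter (fun i : Fin (n-1) => σ i = j ∧ p i j = e)
          ⊆ Finset.univ.filter (fun i : Fin (n-1) => σ i = j) := by
        intro i hi
        rw [Finset.mem_filter] at hi ⊢
        exact ⟨hi.1, hi.2.1⟩
      have hle := Finset.card_le_card hsub
      have hcapj := (hpure j (Finset.mem_univ j) hj).1
      cases e
      · rw [if_neg (by simp), ← hABcard j]
        omega
      · rw [if_pos rfl]
        omega
  have hYdisj : ∀ k k', k ≠ k' → Disjoint (Y k) (Y k') := by
    rintro ⟨j, e⟩ ⟨j', e'⟩ hne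
    rw [Finset.disjoint_left]
    intro v hv hv'
    obtain ⟨hm1, ht1, hf1, -⟩ := hYmem _ _ hv
    obtain ⟨hm2, ht2, hf2, -⟩ := hYmem _ _ hv'
    apply hne
    have hjj : j = j' := hm1.symm.trans hm2
    subst hjj
    congr 1
    cases e <;> cases e'
    · rfl
    · exact absurd (ht2 rfl) (hf1 rfl)
    · exact absurd (ht1 rfl) (hf2 rfl)
    · rfl
  obtain ⟨x, hxinj, hxY⟩ := glue τ Y hYcap hYdisj
  refine ⟨Finset.univ, x, ?_, ?_, ?_, ?_⟩
  · rw [Finset.card_univ, Fintype.card_fin]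
  · intro i _
    have hv : x i ∈ Y (σ i, p i (σ i)) := hxY i
    obtain ⟨hmkv, ht, hf, -⟩ := hYmem _ _ hv
    cases hpe : p i (σ i)
    · exact (hpfalse i (σ i) hpe (x i) hmkv).mpr (hf hpe)
    · exact (hptrue i (σ i) hpe (x i) hmkv).mpr (ht hpe)
  · rw [Finset.card_image_of_injective _ hxinj, Finset.card_univ, Fintype.card_fin]
  · intro u hu w hw hadj
    simp only [Finset.coe_image, Set.mem_image, Finset.coe_univ, Set.mem_univ,
      Set.image_univ, Set.mem_range] at hu hw
    obtain ⟨i, rfl⟩ := hu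
    obtain ⟨i', rfl⟩ := hw
    have hv : x i ∈ Y (σ i, p i (σ i)) := hxY i
    have hv' : x i' ∈ Y (σ i', p i' (σ i')) := hxY i'
    obtain ⟨hm1, ht1, hf1, hs1⟩ := hYmem _ _ hv
    obtain ⟨hm2, ht2, hf2, hs2⟩ := hYmem _ _ hv'
    dsimp only at hm1 ht1 hf1 hs1 hm2 ht2 hf2 hs2
    have hσeq : σ i = σ i' := by
      rw [← hm1, ← hm2]
      exact hadjmk _ _ hadj
    by_cases hjs : σ i = js
    · have h1 : x i ∈ S := hs1 hjs
      have h2 : x i' ∈ S := hs2 (hσeq ▸ hjs)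
      exact hSind (x i) (Finset.mem_coe.mpr h1) (x i') (Finset.mem_coe.mpr h2) hadj
    · obtain ⟨-, e, he⟩ := hpure (σ i) (Finset.mem_univ _) hjs
      have he1 : p i (σ i) = e := he i (Finset.mem_univ i) rfl
      have he2 : p i' (σ i) = e := he i' (Finset.mem_univ i') hσeq.symm
      have he2' : p i' (σ i') = e := by rw [← hσeq]; exact he2
      have hfl := hflip i0 (x i) (x i') hadj
      cases e
      · exact (hf1 he1) (hfl.mpr (hf2 he2'))
      · exact (hfl.mp (ht1 he1)) (ht2 he2')
end

section
/- Let $P_t$ be the path with vertex set $\{1,\dots,t\}$, $t \ge 2n-1$, and let $\mathcal{F}$ be a collection of at least $n-1$ independent sets of $P_t$, each of size at least $n-1$. Suppose a greedy procedure (scanning vertices $1,2,\dots,t$ in order, adding a vertex to $R$ whenever it has an unused color in its list and keeps $R$ independent) produces a rainbow independent set $R$ with $|R| < n$. Then $|R| = n-1$, and for every member $I$ of $\mathcal{F}$ not used as a color by $R$: $|I| = n-1$ and $|I \cap \{a, a+1\}| = 1$ for every $a \in R$. -/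
open Finset

instance pathNAdjDec (t : ℕ) : DecidableRel (pathN t).Adj := by
  unfold pathN SimpleGraph.fromRel
  intro a b
  exact instDecidableAnd

/-- The colors available at vertex `v`: members of `F` containing `v` not yet used. -/
def avail {k : ℕ} (F : Fin k → Finset ℕ) (C : Finset (Fin k)) (v : ℕ) :
    Finset (Fin k) :=
  Finset.univ.filter (fun i => i ∉ C ∧ v ∈ F i)

/-- One step of the greedy algorithm GRIS at vertex `v`: if `v` has an unused color
and is non-adjacent to the current rainbow set, add `v` (with the minimal-index
unused color from its list). -/
def greedyStep (t : ℕ) {k : ℕ} (F : Fin k → Finset ℕ)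
    (st : Finset ℕ × Finset (Fin k)) (v : ℕ) : Finset ℕ × Finset (Fin k) :=
  if h : (avail F st.2 v).Nonempty ∧ ∀ u ∈ st.1, ¬ (pathN t).Adj v u
  then (insert v st.1, insert ((avail F st.2 v).min' h.1) st.2)
  else st

/-- The greedy algorithm GRIS run on the vertices `1, 2, …, t` in order, producing
the rainbow independent set `R` (first component) and used colors `C` (second). -/
def greedy (t : ℕ) {k : ℕ} (F : Fin k → Finset ℕ) : Finset ℕ × Finset (Fin k) :=
  (List.range' 1 t).foldl (greedyStep t F) (∅, ∅)

lemma greedy_main (t : ℕ) {k : ℕ} (F : Fin k → Finset ℕ) (m : ℕ) :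
    ∀ (v : ℕ) (st : Finset ℕ × Finset (Fin k)), 1 ≤ v →
    (∀ u ∈ st.1, 1 ≤ u ∧ u < v) → st.1.card = st.2.card →
    IsIndep (pathN t) (st.1 : Set ℕ) →
    (∀ u ∈ ((List.range' v m).foldl (greedyStep t F) st).1, 1 ≤ u ∧ u < v + m) ∧
    ((List.range' v m).foldl (greedyStep t F) st).1.card
      = ((List.range' v m).foldl (greedyStep t F) st).2.card ∧
    IsIndep (pathN t) (((List.range' v m).foldl (greedyStep t F) st).1 : Set ℕ) ∧
    st.1 ⊆ ((List.range' v m).foldl (greedyStep t F) st).1 ∧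
    st.2 ⊆ ((List.range' v m).foldl (greedyStep t F) st).2 ∧
    (∀ i : Fin k, i ∉ ((List.range' v m).foldl (greedyStep t F) st).2 →
      ∀ w ∈ List.range' v m, w ∈ F i →
      w ∈ ((List.range' v m).foldl (greedyStep t F) st).1 ∨
      w - 1 ∈ ((List.range' v m).foldl (greedyStep t F) st).1) := by
  induction m with
  | zero =>
    intro v st hv h1 h2 h3
    simp only [List.range'_zero, List.foldl_nil, Nat.add_zero]
    exact ⟨h1, h2, h3, Finset.Subset.refl _, Finset.Subset.refl _, by simp⟩
  | succ m ih =>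
    intro v st hv h1 h2 h3
    rw [List.range'_succ]
    simp only [List.foldl_cons]
    -- properties of one step
    set st' := greedyStep t F st v with hst'
    have hsub1 : st.1 ⊆ st'.1 := by
      rw [hst', greedyStep]; split_ifs with h
      · exact Finset.subset_insert _ _
      · exact Finset.Subset.refl _
    have hsub2 : st.2 ⊆ st'.2 := by
      rw [hst', greedyStep]; split_ifs with h
      · exact Finset.subset_insert _ _
      · exact Finset.Subset.refl _
    have hvR : v ∉ st.1 := fun h => absurd (h1 v h).2 (lt_irrefl v)
    have h1' : ∀ u ∈ st'.1, 1 ≤ u ∧ u < v + 1 := by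
      rw [hst', greedyStep]; split_ifs with h
      · intro u hu
        rcases Finset.mem_insert.1 hu with rfl | hu
        · exact ⟨hv, Nat.lt_succ_self _⟩
        · exact ⟨(h1 u hu).1, Nat.lt_succ_of_lt (h1 u hu).2⟩
      · intro u hu; exact ⟨(h1 u hu).1, Nat.lt_succ_of_lt (h1 u hu).2⟩
    have h2' : st'.1.card = st'.2.card := by
      rw [hst', greedyStep]; split_ifs with h
      · have hm2 : (avail F st.2 v).min' h.1 ∉ st.2 := by
          have hm := Finset.min'_mem (avail F st.2 v) h.1
          simp only [avail, Finset.mem_filter] at hm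
          exact hm.2.1
        dsimp only
        rw [Finset.card_insert_of_notMem hvR, Finset.card_insert_of_notMem hm2, h2]
      · exact h2
    have h3' : IsIndep (pathN t) (st'.1 : Set ℕ) := by
      rw [hst', greedyStep]; split_ifs with h
      · intro a ha b hb
        simp only [Finset.coe_insert, Set.mem_insert_iff, Finset.mem_coe] at ha hb
        rcases ha with rfl | ha <;> rcases hb with rfl | hb
        · exact (pathN t).irrefl
        · exact h.2 b hb
        · exact fun hadj => h.2 a ha hadj.symm
        · exact h3 a ha b hb
      · exact h3
    obtain ⟨g1, g2, g3, g4, g5, g6⟩ := ih (v+1) st' (Nat.le_succ_of_le hv) h1' h2' h3'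
    refine ⟨by simpa [Nat.add_assoc, Nat.add_comm 1 m] using g1, g2, g3,
      hsub1.trans g4, hsub2.trans g5, ?_⟩
    intro i hi w hw hwF
    rw [List.mem_cons] at hw
    rcases hw with rfl | hw
    · -- w = v
      have hiC : i ∉ st.2 := fun h => hi (g5 (hsub2 h))
      have hav : i ∈ avail F st.2 w := by
        simp [avail, hiC, hwF]
      rw [hst', greedyStep] at *
      split_ifs at * with h
      · left; exact g4 (Finset.mem_insert_self _ _)
      · push_neg at h
        obtain ⟨u, huR, hadj⟩ := h ⟨i, hav⟩
        have hu := h1 u huR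
        have : w = u + 1 := by
          rw [pathN, SimpleGraph.fromRel_adj] at hadj
          rcases hadj.2 with ⟨h', _⟩ | ⟨h', _⟩
          · omega
          · exact h'
        right
        have : w - 1 = u := by omega
        rw [this]
        exact g4 (hsub1 huR)
    · exact g6 i hi w hw hwF

/-- If GRIS on `P_t` (`t ≥ 2n-1`) with at least `n-1` independent sets of size at
least `n-1` outputs `R` with `|R| < n`, then `|R| = n-1` and every unused member
`I` has `|I| = n-1` and `|I ∩ {a, a+1}| = 1` for all `a ∈ R`. -/
theorem stmt12 (n t k : ℕ) (ht : 2 * n - 1 ≤ t) (hk : n - 1 ≤ k)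
    (F : Fin k → Finset ℕ)
    (hF : ∀ i, F i ⊆ Finset.Icc 1 t ∧ n - 1 ≤ (F i).card ∧
      IsIndep (pathN t) (F i : Set ℕ))
    (hlt : (greedy t F).1.card < n) :
    (greedy t F).1.card = n - 1 ∧
    ∀ i : Fin k, i ∉ (greedy t F).2 →
      (F i).card = n - 1 ∧
      ∀ a ∈ (greedy t F).1, ((F i) ∩ {a, a + 1}).card = 1 := by
  obtain ⟨g1, g2, g3, g4, g5, g6⟩ := greedy_main t F t 1 (∅, ∅) le_rfl
    (by simp) (by simp) (by intro a ha; simp at ha)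
  have hg : greedy t F = (List.range' 1 t).foldl (greedyStep t F) (∅, ∅) := rfl
  rw [hg] at hlt ⊢
  set fin := (List.range' 1 t).foldl (greedyStep t F) (∅, ∅) with hfin
  set R := fin.1 with hR
  set C := fin.2 with hC
  -- basic facts
  have hRt : ∀ u ∈ R, 1 ≤ u ∧ u ≤ t := by
    intro u hu; have := g1 u hu; omega
  have hnonconsec : ∀ a ∈ R, ∀ b ∈ R, b ≠ a + 1 := by
    intro a ha b hb hab
    have hb' := hRt b hb
    have ha' := hRt a ha
    exact g3 a ha b hb (by
      rw [pathN, SimpleGraph.fromRel_adj]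
      exact ⟨by omega, Or.inl ⟨hab, ha'.1, hb'.2⟩⟩)
  have hcover : ∀ i : Fin k, i ∉ C → ∀ w ∈ F i, w ∈ R ∨ w - 1 ∈ R := by
    intro i hi w hw
    have hwt : 1 ≤ w ∧ w ≤ t := by
      have := (hF i).1 hw; rw [Finset.mem_Icc] at this; exact this
    exact g6 i hi w (by rw [List.mem_range'_1]; omega) hw
  -- for each unused i, `F i` decomposes
  have key : ∀ i : Fin k, i ∉ C →
      (F i).card ≤ ∑ a ∈ R, ((F i) ∩ {a, a + 1}).card ∧
      (∀ a ∈ R, ((F i) ∩ {a, a + 1}).card ≤ 1) := by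
    intro i hi
    have hsub : F i ⊆ R.biUnion (fun a => (F i) ∩ {a, a + 1}) := by
      intro w hw
      rcases hcover i hi w hw with h | h
      · exact Finset.mem_biUnion.2 ⟨w, h, Finset.mem_inter.2 ⟨hw, by simp⟩⟩
      · have hw1 : 1 ≤ w := by
          have := (hF i).1 hw; rw [Finset.mem_Icc] at this; omega
        refine Finset.mem_biUnion.2 ⟨w - 1, h, Finset.mem_inter.2 ⟨hw, ?_⟩⟩
        have : w - 1 + 1 = w := by omega
        simp [this]
    have hdisj : ∀ a ∈ R, ∀ b ∈ R, a ≠ b →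
        Disjoint ((F i) ∩ {a, a + 1}) ((F i) ∩ {b, b + 1}) := by
      intro a ha b hb hab
      have h1 := hnonconsec a ha b hb
      have h2 := hnonconsec b hb a ha
      rw [Finset.disjoint_left]
      intro x hx hx'
      rw [Finset.mem_inter, Finset.mem_insert, Finset.mem_singleton] at hx hx'
      rcases hx.2 with rfl | rfl <;> rcases hx'.2 with h | h <;> omega
    have hle : (F i).card ≤ ∑ a ∈ R, ((F i) ∩ {a, a + 1}).card := by
      calc (F i).card ≤ (R.biUnion (fun a => (F i) ∩ {a, a + 1})).card :=
            Finset.card_le_card hsub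
        _ = ∑ a ∈ R, ((F i) ∩ {a, a + 1}).card := Finset.card_biUnion hdisj
    refine ⟨hle, ?_⟩
    intro a ha
    by_contra hc
    push_neg at hc
    have hpair : ({a, a + 1} : Finset ℕ).card = 2 := by
      rw [Finset.card_insert_of_notMem (by simp), Finset.card_singleton]
    have := Finset.eq_of_subset_of_card_le Finset.inter_subset_right
      (by omega : ({a, a+1} : Finset ℕ).card ≤ ((F i) ∩ {a, a + 1}).card)
    have haF : a ∈ F i := by
      have h' : a ∈ (F i) ∩ {a, a+1} := by rw [this]; simp
      exact (Finset.mem_inter.1 h').1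
    have ha1F : a + 1 ∈ F i := by
      have h' : a + 1 ∈ (F i) ∩ {a, a+1} := by rw [this]; simp
      exact (Finset.mem_inter.1 h').1
    refine (hF i).2.2 a haF (a+1) ha1F ?_
    rw [pathN, SimpleGraph.fromRel_adj]
    have h1 : 1 ≤ a := (hRt a ha).1
    have h2 : a + 1 ≤ t := by
      have := (hF i).1 ha1F; rw [Finset.mem_Icc] at this; exact this.2
    exact ⟨by omega, Or.inl ⟨rfl, h1, h2⟩⟩
  -- `R.card ≤ n - 1`
  have hRle : R.card ≤ n - 1 := by
    omega
  -- bound via unused colors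
  have hRbound : ∀ i : Fin k, i ∉ C → n - 1 ≤ R.card := by
    intro i hi
    obtain ⟨hle, hle1⟩ := key i hi
    have : ∑ a ∈ R, ((F i) ∩ {a, a + 1}).card ≤ R.card := by
      calc ∑ a ∈ R, ((F i) ∩ {a, a + 1}).card ≤ ∑ a ∈ R, 1 :=
            Finset.sum_le_sum hle1
        _ = R.card := by rw [Finset.sum_const, smul_eq_mul, mul_one]
    have := (hF i).2.1
    omega
  have hRcard : R.card = n - 1 := by
    by_cases hall : ∀ i : Fin k, i ∈ C
    · have : C = Finset.univ := Finset.eq_univ_iff_forall.2 hall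
      have : C.card = k := by rw [this, Finset.card_univ, Fintype.card_fin]
      omega
    · push_neg at hall
      obtain ⟨i, hi⟩ := hall
      have := hRbound i hi
      omega
  refine ⟨hRcard, ?_⟩
  intro i hi
  obtain ⟨hle, hle1⟩ := key i hi
  have hsum_le : ∑ a ∈ R, ((F i) ∩ {a, a + 1}).card ≤ R.card := by
    calc ∑ a ∈ R, ((F i) ∩ {a, a + 1}).card ≤ ∑ a ∈ R, 1 :=
          Finset.sum_le_sum hle1
      _ = R.card := by rw [Finset.sum_const, smul_eq_mul, mul_one]
  have hFn := (hF i).2.1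
  have hFcard : (F i).card = n - 1 := by omega
  refine ⟨hFcard, ?_⟩
  have hsum_eq : ∑ a ∈ R, ((F i) ∩ {a, a + 1}).card = ∑ a ∈ R, 1 := by
    rw [Finset.sum_const, smul_eq_mul, mul_one]
    omega
  intro a ha
  exact (Finset.sum_eq_sum_iff_of_le hle1).1 hsum_eq a ha
end

section
/- Let $t \ge 2n$ and let $\mathcal{F}$ be a collection of $n$ independent $n$-sets of the cycle $C_t$. Then $(\mathcal{F}, C_t)$ admits a rainbow independent $(n-1)$-set. -/
open Finset

/-- Path version: given at least `m` index sets of naturals, each of size ≥ m and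
containing no two consecutive naturals, one can pick `m` representatives pairwise
at distance ≥ 2. -/
lemma path_lemma {k : ℕ} (m : ℕ) :
    ∀ (T : Finset (Fin k)) (A : Fin k → Finset ℕ),
    m ≤ T.card → (∀ i ∈ T, m ≤ (A i).card) →
    (∀ i ∈ T, ∀ a ∈ A i, a + 1 ∉ A i) →
    ∃ (s : Finset (Fin k)) (x : Fin k → ℕ), s ⊆ T ∧ s.card = m ∧
      (∀ i ∈ s, x i ∈ A i) ∧
      (∀ i ∈ s, ∀ j ∈ s, i ≠ j → x i + 2 ≤ x j ∨ x j + 2 ≤ x i) := by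
  induction m with
  | zero =>
    intro T A _ _ _
    exact ⟨∅, fun _ => 0, empty_subset _, card_empty, by simp, by simp⟩
  | succ m ih =>
    intro T A hT hcard hind
    have hTne : T.Nonempty := card_pos.mp (by omega)
    obtain ⟨j0, hj0T⟩ := hTne
    have hU : (T.biUnion A).Nonempty := by
      have : (A j0).Nonempty := card_pos.mp (by have := hcard j0 hj0T; omega)
      obtain ⟨a, ha⟩ := this
      exact ⟨a, mem_biUnion.mpr ⟨j0, hj0T, ha⟩⟩
    set x0 := (T.biUnion A).min' hU with hx0
    have hx0mem := (T.biUnion A).min'_mem hU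
    obtain ⟨j, hjT, hjx0⟩ := mem_biUnion.mp hx0mem
    have hmin : ∀ i ∈ T, ∀ a ∈ A i, x0 ≤ a := by
      intro i hi a ha
      exact (T.biUnion A).min'_le a (mem_biUnion.mpr ⟨i, hi, ha⟩)
    set A' : Fin k → Finset ℕ := fun i => (A i).filter (fun a => x0 + 2 ≤ a) with hA'
    have hA'sub : ∀ i, A' i ⊆ A i := fun i => filter_subset _ _
    have hT' : m ≤ (T.erase j).card := by
      rw [card_erase_of_mem hjT]; omega
    have hcard' : ∀ i ∈ T.erase j, m ≤ (A' i).card := by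
      intro i hi
      have hiT : i ∈ T := mem_of_mem_erase hi
      have hsd : ((A i) \ (A' i)).card ≤ 1 := by
        apply card_le_one.mpr
        intro a ha b hb
        have ha' := mem_sdiff.mp ha
        have hb' := mem_sdiff.mp hb
        have haA := ha'.1
        have hbA := hb'.1
        have ha2 : a = x0 ∨ a = x0 + 1 := by
          have h1 := hmin i hiT a haA
          have h2 : ¬ (x0 + 2 ≤ a) := by
            intro h; exact ha'.2 (mem_filter.mpr ⟨haA, h⟩)
          omega
        have hb2 : b = x0 ∨ b = x0 + 1 := by
          have h1 := hmin i hiT b hbA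
          have h2 : ¬ (x0 + 2 ≤ b) := by
            intro h; exact hb'.2 (mem_filter.mpr ⟨hbA, h⟩)
          omega
        by_contra hab
        have hx01 : x0 ∈ A i ∧ x0 + 1 ∈ A i := by
          rcases ha2 with rfl | rfl <;> rcases hb2 with rfl | rfl <;>
            first | (exact absurd rfl hab) | exact ⟨haA, hbA⟩ | exact ⟨hbA, haA⟩
        exact hind i hiT x0 hx01.1 hx01.2
      have heq : ((A i) \ (A' i)).card + (A' i).card = (A i).card :=
        card_sdiff_add_card_eq_card (hA'sub i)
      have := hcard i hiT
      omega
    have hind' : ∀ i ∈ T.erase j, ∀ a ∈ A' i, a + 1 ∉ A' i := by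
      intro i hi a ha hcontra
      exact hind i (mem_of_mem_erase hi) a (hA'sub i ha) (hA'sub i hcontra)
    obtain ⟨s', x', hs'T, hs'card, hs'mem, hs'sep⟩ := ih (T.erase j) A' hT' hcard' hind'
    have hjs' : j ∉ s' := fun h => (notMem_erase j T) (hs'T h)
    refine ⟨insert j s', fun i => if i ∈ s' then x' i else x0, ?_, ?_, ?_, ?_⟩
    · intro i hi
      rcases mem_insert.mp hi with rfl | hi'
      · exact hjT
      · exact mem_of_mem_erase (hs'T hi')
    · rw [card_insert_of_notMem hjs', hs'card]
    · intro i hi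
      rcases mem_insert.mp hi with rfl | hi'
      · simp only [if_neg hjs']
        exact hjx0
      · simp only [if_pos hi']
        exact hA'sub i (hs'mem i hi')
    · intro i hi i' hi' hne
      rcases mem_insert.mp hi with rfl | his
      · rcases mem_insert.mp hi' with rfl | hi's
        · exact absurd rfl hne
        · simp only [if_neg hjs', if_pos hi's]
          left
          exact (mem_filter.mp (hs'mem i' hi's)).2
      · rcases mem_insert.mp hi' with rfl | hi's
        · simp only [if_neg hjs', if_pos his]
          right
          exact (mem_filter.mp (hs'mem i his)).2
        · simp only [if_pos his, if_pos hi's]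
          exact hs'sep i his i' hi's hne

/-- For `t ≥ 2n`, every `n` independent `n`-sets of `C_t` admit a rainbow
independent `(n-1)`-set. -/
theorem stmt13 (n t : ℕ) (ht : 2 * n ≤ t)
    (F : Fin n → Finset (ZMod t))
    (hF : ∀ i, (F i).card = n ∧ IsIndep (cyc t) (F i : Set (ZMod t))) :
    RainbowIndep (cyc t) F (n - 1) := by
  rcases Nat.eq_zero_or_pos n with hn | hn
  · refine ⟨∅, fun _ => 0, by simp [hn], by simp, by simp [hn], ?_⟩
    intro a ha
    simp at ha
  · have ht2 : 2 ≤ t := by omega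
    haveI : NeZero t := ⟨by omega⟩
    set A : Fin n → Finset ℕ := fun i => ((F i).image ZMod.val).erase (t - 1) with hA
    have hAmem : ∀ i, ∀ a ∈ A i, a ≠ t - 1 ∧ ∃ u ∈ F i, ZMod.val u = a := by
      intro i a ha
      have := mem_erase.mp ha
      exact ⟨this.1, mem_image.mp this.2⟩
    have hAlt : ∀ i, ∀ a ∈ A i, a + 1 < t := by
      intro i a ha
      obtain ⟨hne, u, _, rfl⟩ := hAmem i a ha
      have := ZMod.val_lt u
      omega
    have hAcard : ∀ i ∈ (univ : Finset (Fin n)), n - 1 ≤ (A i).card := by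
      intro i _
      have h1 : ((F i).image ZMod.val).card = n := by
        rw [card_image_of_injective _ (ZMod.val_injective t), (hF i).1]
      calc n - 1 = ((F i).image ZMod.val).card - 1 := by rw [h1]
        _ ≤ (A i).card := pred_card_le_card_erase
    have hAind : ∀ i ∈ (univ : Finset (Fin n)), ∀ a ∈ A i, a + 1 ∉ A i := by
      intro i _ a ha hcontra
      obtain ⟨_, u, huF, hu⟩ := hAmem i a ha
      obtain ⟨_, u', hu'F, hu'⟩ := hAmem i (a + 1) hcontra
      have hlt : a + 1 < t := by have := hAlt i (a + 1) hcontra; omega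
      have hu'eq : u' = u + 1 := by
        have h1 : ((a + 1 : ℕ) : ZMod t) = u' := by
          rw [← hu']; exact ZMod.natCast_rightInverse u'
        have h2 : ((a : ℕ) : ZMod t) = u := by
          rw [← hu]; exact ZMod.natCast_rightInverse u
        rw [← h1, ← h2]; push_cast; ring
      have hadj : (cyc t).Adj u u' := by
        rw [cyc, SimpleGraph.fromRel_adj]
        refine ⟨?_, Or.inl hu'eq⟩
        intro h
        rw [h] at hu
        omega
      exact (hF i).2 u (by exact_mod_cast huF) u' (by exact_mod_cast hu'F) hadj
    obtain ⟨s, y, _, hscard, hsmem, hssep⟩ :=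
      path_lemma (n - 1) (univ : Finset (Fin n)) A (by simp) hAcard hAind
    set x : Fin n → ZMod t := fun i => ((y i : ℕ) : ZMod t) with hx
    have hval : ∀ i ∈ s, ZMod.val (x i) = y i := by
      intro i hi
      have hlt := hAlt i (y i) (hsmem i hi)
      exact ZMod.val_cast_of_lt (by omega)
    have hxF : ∀ i ∈ s, x i ∈ F i := by
      intro i hi
      obtain ⟨_, u, huF, hu⟩ := hAmem i (y i) (hsmem i hi)
      have : x i = u := by rw [hx]; simp only; rw [← hu]; exact ZMod.natCast_rightInverse u
      rw [this]; exact huF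
    have hinj : Set.InjOn x s := by
      intro i hi j hj hij
      by_contra hne
      have := hssep i hi j hj hne
      have h1 := hval i hi
      have h2 := hval j hj
      rw [hij] at h1
      omega
    refine ⟨s, x, hscard, hxF, ?_, ?_⟩
    · rw [card_image_of_injOn hinj, hscard]
    · intro a ha b hb hadj
      simp only [coe_image, Set.mem_image, mem_coe] at ha hb
      obtain ⟨i, hi, rfl⟩ := ha
      obtain ⟨j, hj, rfl⟩ := hb
      rw [cyc, SimpleGraph.fromRel_adj] at hadj
      obtain ⟨hne, hor⟩ := hadj
      have hij : i ≠ j := fun h => hne (by rw [h])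
      have hsep := hssep i hi j hj hij
      have hyi := hval i hi
      have hyj := hval j hj
      have hlti := hAlt i (y i) (hsmem i hi)
      have hltj := hAlt j (y j) (hsmem j hj)
      rcases hor with h | h
      · have : ZMod.val (x j) = y i + 1 := by
          rw [h, hx]; simp only
          have : ((y i : ℕ) : ZMod t) + 1 = ((y i + 1 : ℕ) : ZMod t) := by push_cast; ring
          rw [this]
          exact ZMod.val_cast_of_lt hlti
        omega
      · have : ZMod.val (x i) = y j + 1 := by
          rw [h, hx]; simp only
          have : ((y j : ℕ) : ZMod t) + 1 = ((y j + 1 : ℕ) : ZMod t) := by push_cast; ring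
          rw [this]
          exact ZMod.val_cast_of_lt hltj
        omega
end

section
/- Let $G$ be a graph of maximum degree at most $2$, and suppose $G$ has a connected component $H$ which is a path or an odd cycle. Let $\mathcal{F}$ be a collection of $n-1$ independent $n$-sets of $G$, set $h = h(\mathcal{F}, V(H))$, and assume that every collection of $h$ independent $h$-sets of $H$ has a rainbow independent $h$-set, and that every collection of $n-h-1$ independent sets of $G - V(H)$, each of size at least $n-h$, has a rainbow independent $(n-h-1)$-set. Then $\mathcal{F}$ admits a rainbow independent $(n-1)$-set in $G$. -/
open Finset

lemma isIndep_mono {V : Type*} (G : SimpleGraph V) {S T : Set V} (hTS : T ⊆ S)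
    (hs : IsIndep G S) : IsIndep G T :=
  fun a ha b hb => hs a (hTS ha) b (hTS hb)

/-- Claim 2 of the proof of Theorem 3: if `G` has maximum degree at most `2`, a
component `H` (with vertex set `S`) which is a path or an odd cycle (under
`Δ(G) ≤ 2`: some vertex of degree `≤ 1`, or all degrees `2` with oddly many
vertices), `𝓕` is a collection of `n-1` independent `n`-sets, `h = h(𝓕, V(H))`,
every `h` independent `h`-sets of `H` have a rainbow independent `h`-set, and
every `n-h-1` independent `(n-h)⁺`-sets of `G - V(H)` have a rainbow independent
`(n-h-1)`-set, then `𝓕` admits a rainbow independent `(n-1)`-set. -/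
theorem stmt15 {V : Type*} [Fintype V] [DecidableEq V]
    (G : SimpleGraph V) [DecidableRel G.Adj] (n : ℕ)
    (hdeg : ∀ v : V, G.degree v ≤ 2)
    (c : G.ConnectedComponent) (S : Finset V) (hS : (S : Set V) = c.supp)
    (hpathOrOdd : (∃ v ∈ S, G.degree v ≤ 1) ∨
      ((∀ v ∈ S, G.degree v = 2) ∧ Odd S.card))
    (F : Fin (n - 1) → Finset V)
    (hF : ∀ i, (F i).card = n ∧ IsIndep G (F i : Set V))
    (h : ℕ) (hh : h = hFun F Finset.univ S)
    (hyp1 : ∀ F' : Fin h → Finset V,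
      (∀ i, F' i ⊆ S ∧ (F' i).card = h ∧ IsIndep G (F' i : Set V)) →
      RainbowIndep G F' h)
    (hyp2 : ∀ F'' : Fin (n - h - 1) → Finset V,
      (∀ i, Disjoint (F'' i) S ∧ n - h ≤ (F'' i).card ∧ IsIndep G (F'' i : Set V)) →
      RainbowIndep G F'' (n - h - 1)) :
    RainbowIndep G F (n - 1) := by
  classical
  -- basic facts about h
  set P : Set ℕ :=
    {m : ℕ | m ≤ (Finset.univ.filter (fun i => m ≤ ((F i) ∩ S).card)).card} with hPdef
  have hbdd : BddAbove P := by
    refine ⟨n - 1, fun m hm => ?_⟩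
    exact le_trans hm (le_trans (Finset.card_filter_le _ _) (by simp))
  have h0P : (0 : ℕ) ∈ P := by simp [hPdef]
  have hhs : h = sSup P := by rw [hh]; rfl
  have hmem : h ∈ P := by rw [hhs]; exact Nat.sSup_mem ⟨0, h0P⟩ hbdd
  have hnot : h + 1 ∉ P := by
    intro hmem'
    have := le_csSup hbdd hmem'
    rw [← hhs] at this
    omega
  have hmem' : h ≤ (Finset.univ.filter (fun i => h ≤ ((F i) ∩ S).card)).card := hmem
  have hnot' : ¬ (h + 1 ≤ (Finset.univ.filter (fun i => h + 1 ≤ ((F i) ∩ S).card)).card) :=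
    hnot
  have hTsub : (Finset.univ.filter (fun i => h + 1 ≤ ((F i) ∩ S).card)) ⊆
      (Finset.univ.filter (fun i => h ≤ ((F i) ∩ S).card)) := by
    intro i hi
    simp only [Finset.mem_filter] at *
    exact ⟨hi.1, by omega⟩
  obtain ⟨A, hTA, hAT0, hAcard⟩ :=
    Finset.exists_subsuperset_card_eq hTsub (by omega) hmem'
  have hAin : ∀ i ∈ A, h ≤ ((F i) ∩ S).card := fun i hi =>
    (Finset.mem_filter.mp (hAT0 hi)).2
  have hAout : ∀ i, i ∉ A → ((F i) ∩ S).card ≤ h := by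
    intro i hi
    by_contra hc
    exact hi (hTA (Finset.mem_filter.mpr ⟨Finset.mem_univ _, by omega⟩))
  have hhk : h ≤ n - 1 := le_trans hmem' (le_trans (Finset.card_filter_le _ _) (by simp))
  -- the complement
  have hBcard : Aᶜ.card = n - h - 1 := by
    have := Finset.card_compl A
    simp only [Fintype.card_fin] at this
    omega
  -- equivalences
  set eA : Fin h ≃ A := (A.equivFinOfCardEq hAcard).symm with heA
  set eB : Fin (n - h - 1) ≃ (Aᶜ : Finset (Fin (n - 1))) :=
    ((Aᶜ : Finset (Fin (n - 1))).equivFinOfCardEq hBcard).symm with heB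
  -- the families
  have hF'ex : ∀ i : Fin h, ∃ t ⊆ (F (eA i : Fin (n - 1))) ∩ S, t.card = h :=
    fun i => Finset.exists_subset_card_eq (hAin _ (eA i).2)
  choose F' hF'sub hF'card using hF'ex
  obtain ⟨s1, x1, hs1card, hx1mem, hs1img, hs1ind⟩ := hyp1 F' (by
    intro i
    refine ⟨(hF'sub i).trans Finset.inter_subset_right, hF'card i, ?_⟩
    refine isIndep_mono G ?_ (hF (eA i : Fin (n - 1))).2
    exact_mod_cast Finset.coe_subset.mpr ((hF'sub i).trans Finset.inter_subset_left))
  have hs1univ : s1 = Finset.univ := Finset.eq_univ_of_card _ (by simpa using hs1card)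
  set F'' : Fin (n - h - 1) → Finset V := fun i => F (eB i : Fin (n - 1)) \ S with hF''def
  obtain ⟨s2, x2, hs2card, hx2mem, hs2img, hs2ind⟩ := hyp2 F'' (by
    intro i
    simp only [hF''def]
    refine ⟨Finset.sdiff_disjoint, ?_, ?_⟩
    · have h1 := (hF (eB i : Fin (n - 1))).1
      have h2 : ((F (eB i : Fin (n - 1))) ∩ S).card ≤ h :=
        hAout _ (Finset.mem_compl.mp (eB i).2)
      have h3 := Finset.card_sdiff_add_card_inter (F (eB i : Fin (n - 1))) S
      omega
    · refine isIndep_mono G ?_ (hF (eB i : Fin (n - 1))).2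
      exact_mod_cast Finset.coe_subset.mpr (Finset.sdiff_subset))
  have hs2univ : s2 = Finset.univ := Finset.eq_univ_of_card _ (by simpa using hs2card)
  -- injectivity facts
  have hx1inj : Set.InjOn x1 (s1 : Set (Fin h)) := by
    rw [← Finset.card_image_iff]; omega
  have hx2inj : Set.InjOn x2 (s2 : Set (Fin (n - h - 1))) := by
    rw [← Finset.card_image_iff]; omega
  -- define the selection
  set x : Fin (n - 1) → V := fun i =>
    if hi : i ∈ A then x1 (eA.symm ⟨i, hi⟩)
    else x2 (eB.symm ⟨i, Finset.mem_compl.mpr hi⟩) with hxdef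
  have hxA : ∀ (i : Fin (n - 1)) (hi : i ∈ A), x i ∈ F i ∩ S := by
    intro i hi
    have hm : x1 (eA.symm ⟨i, hi⟩) ∈ F' (eA.symm ⟨i, hi⟩) :=
      hx1mem _ (by simp [hs1univ])
    have := hF'sub (eA.symm ⟨i, hi⟩) hm
    rw [Equiv.apply_symm_apply] at this
    simpa [hxdef, hi] using this
  have hxB : ∀ (i : Fin (n - 1)) (hi : i ∉ A), x i ∈ F i \ S := by
    intro i hi
    have hm : x2 (eB.symm ⟨i, Finset.mem_compl.mpr hi⟩) ∈
        F'' (eB.symm ⟨i, Finset.mem_compl.mpr hi⟩) := hx2mem _ (by simp [hs2univ])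
    rw [hF''def] at hm
    simp only at hm
    rw [Equiv.apply_symm_apply] at hm
    simpa [hxdef, hi] using hm
  -- cross-component non-adjacency
  have hcross : ∀ a b : V, a ∈ S → b ∉ S → ¬ G.Adj a b := by
    intro a b ha hb hadj
    apply hb
    have hac : a ∈ c.supp := by rw [← hS]; exact ha
    rw [SimpleGraph.ConnectedComponent.mem_supp_iff] at hac
    have hbc : G.connectedComponentMk b = c := by
      rw [← hac]; exact (SimpleGraph.ConnectedComponent.sound hadj.symm.reachable)
    have : b ∈ c.supp := (SimpleGraph.ConnectedComponent.mem_supp_iff _ _).mpr hbc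
    rw [← hS] at this; exact this
  -- membership of image values in the two rainbow images
  have himg : ∀ i : Fin (n - 1),
      (x i ∈ (s1.image x1) ∧ x i ∈ S) ∨ (x i ∈ (s2.image x2) ∧ x i ∉ S) := by
    intro i
    by_cases hi : i ∈ A
    · left
      refine ⟨?_, (Finset.mem_inter.mp (hxA i hi)).2⟩
      rw [hs1univ]
      exact Finset.mem_image.mpr ⟨eA.symm ⟨i, hi⟩, Finset.mem_univ _, by simp [hxdef, hi]⟩
    · right
      refine ⟨?_, (Finset.mem_sdiff.mp (hxB i hi)).2⟩
      rw [hs2univ]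
      exact Finset.mem_image.mpr
        ⟨eB.symm ⟨i, Finset.mem_compl.mpr hi⟩, Finset.mem_univ _, by simp [hxdef, hi]⟩
  -- injectivity of x
  have hxinj : Set.InjOn x (Finset.univ : Finset (Fin (n - 1))) := by
    intro i _ j _ hij
    by_cases hi : i ∈ A <;> by_cases hj : j ∈ A
    · have h1 : x1 (eA.symm ⟨i, hi⟩) = x1 (eA.symm ⟨j, hj⟩) := by
        simpa [hxdef, hi, hj] using hij
      have := hx1inj (by simp [hs1univ]) (by simp [hs1univ]) h1
      have := congrArg (fun z => ((eA z : A) : Fin (n - 1))) this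
      simpa [Equiv.apply_symm_apply] using this
    · exact absurd (hij ▸ (Finset.mem_inter.mp (hxA i hi)).2)
        (Finset.mem_sdiff.mp (hxB j hj)).2
    · exact absurd (hij.symm ▸ (Finset.mem_inter.mp (hxA j hj)).2)
        (Finset.mem_sdiff.mp (hxB i hi)).2
    · have h1 : x2 (eB.symm ⟨i, Finset.mem_compl.mpr hi⟩) =
          x2 (eB.symm ⟨j, Finset.mem_compl.mpr hj⟩) := by
        simpa [hxdef, hi, hj] using hij
      have := hx2inj (by simp [hs2univ]) (by simp [hs2univ]) h1
      have := congrArg (fun z => ((eB z : (Aᶜ : Finset (Fin (n-1)))) : Fin (n - 1))) this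
      simpa [Equiv.apply_symm_apply] using this
  refine ⟨Finset.univ, x, by simp, ?_, ?_, ?_⟩
  · intro i _
    by_cases hi : i ∈ A
    · exact (Finset.mem_inter.mp (hxA i hi)).1
    · exact (Finset.mem_sdiff.mp (hxB i hi)).1
  · rw [Finset.card_image_iff.mpr hxinj]; simp
  · intro a ha b hb hadj
    simp only [Finset.coe_image, Set.mem_image, Finset.mem_coe] at ha hb
    obtain ⟨i, -, rfl⟩ := ha
    obtain ⟨j, -, rfl⟩ := hb
    rcases himg i with ⟨hi1, hiS⟩ | ⟨hi2, hiS⟩ <;>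
      rcases himg j with ⟨hj1, hjS⟩ | ⟨hj2, hjS⟩
    · exact hs1ind _ (by exact_mod_cast hi1) _ (by exact_mod_cast hj1) hadj
    · exact hcross _ _ hiS hjS hadj
    · exact hcross _ _ hjS hiS hadj.symm
    · exact hs2ind _ (by exact_mod_cast hi2) _ (by exact_mod_cast hj2) hadj
end
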